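/- arXiv:1207.6850 — 7 statements merged into one kernel-verified Lean document; each statement's English description precedes it below -/
import Mathlib

section
/- Let s = (s_1,…,s_n) be a sequence of positive integers with s_n = 1. For every nonnegative integer t, the number of lattice points λ ∈ ℤ^n satisfying 0 ≤ λ_1/s_1 ≤ ⋯ ≤ λ_n/s_n ≤ t equals Σ_{i=0}^{n} c_i · C(t+n−i, n), where c_i = #{ r ∈ Ψ_n : des_s(r) = i } and C(·,·) is the binomial coefficient. (Equivalently, the δ-vector of P_s satisfies δ_{P_s,i} = #{ r ∈ Ψ_n : des_s(r) = i }.) -/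
/-!
Write `λ_i = s_i m_i + r_i` with `r ∈ Ψ_n` (indices from `0`). As `r_i / s_i ∈ [0, 1)`, the
inequality `λ_i / s_i ≤ λ_{i+1} / s_{i+1}` holds iff `m_i + [i is an s-descent of r] ≤ m_{i+1}`;
`s_{n-1} = 1` forces `r_{n-1} = 0`, so the last inequality reads `m_{n-1} ≤ t`. With `D_i` the
number of s-descents of `r` before `i`, the substitution `p_i = m_i + i - D_i` turns these chains
into the strictly increasing sequences with values in `{0, …, t + n - des_s(r) - 1}`, of which
there are `C(t + n - des_s(r), n)`. Summing over `r ∈ Ψ_n` grouped by `des_s(r)` gives the formula.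
-/

/-- The generator vectors of the s-lecture hall parallelepiped: `lhVec s j` has
`i`-th coordinate `s i` for `i ≥ j` and `0` for `i < j`. -/
def lhVec {n : ℕ} (s : Fin n → ℕ) (j : Fin n) : Fin n → ℝ :=
  fun i => if j ≤ i then (s i : ℝ) else 0

/-- The s-lecture hall parallelepiped: the half-open parallelepiped generated by
the vectors `lhVec s j`. -/
def lhPar {n : ℕ} (s : Fin n → ℕ) : Set (Fin n → ℝ) :=
  {x | ∃ c : Fin n → ℝ, (∀ j, 0 ≤ c j ∧ c j < 1) ∧ x = ∑ j, c j • lhVec s j}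

/-- `lhEll S i` is the number of lattice points of `S ⊆ ℝ^N` whose last coordinate
equals `i`. -/
noncomputable def lhEll {N : ℕ} (S : Set (Fin N → ℝ)) (i : ℕ) : ℕ :=
  Set.ncard {x : Fin N → ℤ | (fun k => (x k : ℝ)) ∈ S ∧
    ∀ j : Fin N, (j : ℕ) = N - 1 → x j = (i : ℤ)}

/-- The number of s-descents of `r`: indices `i` with `r i / s i > r (i+1) / s (i+1)`. -/
noncomputable def sDes {N : ℕ} (s : Fin N → ℕ) (r : Fin N → ℤ) : ℕ :=
  Set.ncard {i : Fin N | ∃ h : (i : ℕ) + 1 < N,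
    (r i : ℚ) / (s i : ℚ) > (r ⟨(i : ℕ) + 1, h⟩ : ℚ) / (s ⟨(i : ℕ) + 1, h⟩ : ℚ)}

/-- The number of s-ascents of `r`: indices `i` with `r i / s i < r (i+1) / s (i+1)`. -/
noncomputable def sAsc {N : ℕ} (s : Fin N → ℕ) (r : Fin N → ℤ) : ℕ :=
  Set.ncard {i : Fin N | ∃ h : (i : ℕ) + 1 < N,
    (r i : ℚ) / (s i : ℚ) < (r ⟨(i : ℕ) + 1, h⟩ : ℚ) / (s ⟨(i : ℕ) + 1, h⟩ : ℚ)}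

/-- The number of (regular) descents of `r`: indices `i` with `r i > r (i+1)`. -/
noncomputable def rDes {N : ℕ} (r : Fin N → ℤ) : ℕ :=
  Set.ncard {i : Fin N | ∃ h : (i : ℕ) + 1 < N, r ⟨(i : ℕ) + 1, h⟩ < r i}

/-- The number of (regular) ascents of `r`: indices `i` with `r i < r (i+1)`. -/
noncomputable def rAsc {N : ℕ} (r : Fin N → ℤ) : ℕ :=
  Set.ncard {i : Fin N | ∃ h : (i : ℕ) + 1 < N, r i < r ⟨(i : ℕ) + 1, h⟩}

/-- The number of s-descents of `r` at positions strictly before position `i`. -/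
noncomputable def sDesLt {N : ℕ} (s : Fin N → ℕ) (r : Fin N → ℤ) (i : Fin N) : ℕ :=
  Set.ncard {j : Fin N | (j : ℕ) < (i : ℕ) ∧ ∃ h : (j : ℕ) + 1 < N,
    (r j : ℚ) / (s j : ℚ) > (r ⟨(j : ℕ) + 1, h⟩ : ℚ) / (s ⟨(j : ℕ) + 1, h⟩ : ℚ)}

/-- `lhPsi s` is the set `Ψ_n = {0,…,s 0 − 1} × ⋯ × {0,…,s (n-1) − 1}`. -/
def lhPsi {n : ℕ} (s : Fin n → ℕ) : Set (Fin n → ℤ) :=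
  {r | ∀ i, 0 ≤ r i ∧ r i < (s i : ℤ)}

/-- `inDilate s t lam` says that the lattice point `lam` satisfies
`0 ≤ lam 0 / s 0 ≤ lam 1 / s 1 ≤ ⋯ ≤ lam (n-1) / s (n-1) ≤ t`,
i.e. lies in the `t`-th dilate of the s-lecture hall polytope. -/
def inDilate {n : ℕ} (s : Fin n → ℕ) (t : ℕ) (lam : Fin n → ℤ) : Prop :=
  (∀ i : Fin n, (i : ℕ) = 0 → 0 ≤ (lam i : ℚ) / (s i : ℚ)) ∧
  (∀ i : Fin n, ∀ h : (i : ℕ) + 1 < n,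
    (lam i : ℚ) / (s i : ℚ) ≤ (lam ⟨(i : ℕ) + 1, h⟩ : ℚ) / (s ⟨(i : ℕ) + 1, h⟩ : ℚ)) ∧
  (∀ i : Fin n, (i : ℕ) = n - 1 → (lam i : ℚ) / (s i : ℚ) ≤ (t : ℚ))

open Finset

lemma Set.ncard_eq_sum_ncard_fibers {α β : Type*} {A : Set α} {B : Finset β} {f : α → β}
    (hf : Set.MapsTo f A B) (hfin : ∀ b ∈ B, {a ∈ A | f a = b}.Finite) :
    A.ncard = ∑ b ∈ B, {a ∈ A | f a = b}.ncard := by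
  have hA : A = ⋃ b ∈ (B : Set β), {a ∈ A | f a = b} := by
    ext a
    simpa using fun ha => hf ha
  conv_lhs => rw [hA]
  rw [B.finite_toSet.ncard_biUnion hfin
    (fun b _ b' _ hne => Set.disjoint_left.2 fun _ h h' => hne (h.2.symm.trans h'.2)),
    finsum_mem_coe_finset]

lemma ncard_setOf_strictMono_mem {α : Type*} [LinearOrder α] (n : ℕ) (s : Finset α) :
    {f : Fin n → α | StrictMono f ∧ ∀ i, f i ∈ s}.ncard = s.card.choose n := by
  have hbij : Set.BijOn (fun f : Fin n → α => univ.image f)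
      {f | StrictMono f ∧ ∀ i, f i ∈ s} (powersetCard n s) := by
    refine ⟨fun f hf => ?_, fun f hf g hg hfg => ?_, fun A hA => ?_⟩
    · rw [Finset.mem_coe, mem_powersetCard, card_image_of_injective _ hf.1.injective, card_fin]
      exact ⟨fun a ha => by obtain ⟨i, -, rfl⟩ := mem_image.1 ha; exact hf.2 i, rfl⟩
    · refine (hf.1.range_inj hg.1).1 ?_
      simpa [← Set.image_univ] using congrArg ((↑) : Finset α → Set α) hfg
    · obtain ⟨hAs, hAn⟩ := mem_powersetCard.1 hA
      refine ⟨A.orderEmbOfFin hAn, ⟨(A.orderEmbOfFin hAn).strictMono,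
        fun i => hAs (A.orderEmbOfFin_mem hAn i)⟩, coe_injective ?_⟩
      simp
  rw [← hbij.injOn.ncard_image, hbij.image_eq, Set.ncard_coe_finset, card_powersetCard]

lemma Fin.strictMono_iff_lt_add_one {α : Type*} [Preorder α] {n : ℕ} {f : Fin n → α} :
    StrictMono f ↔ ∀ (i : Fin n) (h : (i : ℕ) + 1 < n), f i < f ⟨i + 1, h⟩ := by
  cases n with
  | zero => exact ⟨fun _ i => i.elim0, fun _ i => i.elim0⟩
  | succ k =>
    rw [Fin.strictMono_iff_lt_succ]
    exact ⟨fun h i hi => h ⟨i, by omega⟩, fun h i => h i.castSucc (by simp)⟩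

lemma Fin.strictMono_and_bounded_iff {α : Type*} [Preorder α] {n : ℕ} {f : Fin n → α} {a b : α} :
    (StrictMono f ∧ ∀ i, a ≤ f i ∧ f i < b) ↔
      (∀ i : Fin n, (i : ℕ) = 0 → a ≤ f i) ∧
      (∀ (i : Fin n) (h : (i : ℕ) + 1 < n), f i < f ⟨i + 1, h⟩) ∧
      (∀ i : Fin n, (i : ℕ) = n - 1 → f i < b) := by
  rw [Fin.strictMono_iff_lt_add_one]
  refine ⟨fun ⟨hf, hab⟩ => ⟨fun i _ => (hab i).1, hf, fun i _ => (hab i).2⟩,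
    fun ⟨ha, hf, hb⟩ => ⟨hf, fun i => ?_⟩⟩
  have hmono := (Fin.strictMono_iff_lt_add_one.2 hf).monotone
  constructor
  · exact (ha ⟨0, i.pos⟩ rfl).trans (hmono (Fin.mk_le_of_le_val (Nat.zero_le _)))
  · exact (hmono (Fin.le_def.2 (by simp; omega) : i ≤ ⟨n - 1, by have := i.is_lt; omega⟩)).trans_lt
      (hb _ rfl)

lemma intCast_add_le_intCast_add_iff {α : Type*} [Field α] [LinearOrder α] [IsStrictOrderedRing α]
    {x y : α} (hx : x ∈ Set.Ico 0 1) (hy : y ∈ Set.Ico 0 1) (a b : ℤ) :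
    (a : α) + x ≤ b + y ↔ a + (if y < x then 1 else 0) ≤ b := by
  obtain ⟨hx0, hx1⟩ := hx
  obtain ⟨hy0, hy1⟩ := hy
  split_ifs with hyx
  · rw [Int.add_one_le_iff, ← Int.cast_lt (R := α)]
    constructor <;> intro h
    · linarith
    · have : (a : α) + 1 ≤ b := by exact_mod_cast Int.add_one_le_iff.2 (Int.cast_lt.1 h)
      linarith
  · rw [add_zero, ← Int.lt_add_one_iff, ← Int.cast_lt (R := α), Int.cast_add, Int.cast_one]
    constructor <;> intro h
    · linarith
    · have : (a : α) ≤ b := by exact_mod_cast Int.lt_add_one_iff.1 (by exact_mod_cast h)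
      linarith

section LectureHall

variable {n : ℕ} (s : Fin n → ℕ)

lemma sDesLt_of_val_eq_zero (r : Fin n → ℤ) {i : Fin n} (hi : (i : ℕ) = 0) :
    sDesLt s r i = 0 := by
  simp [sDesLt, hi]

lemma sDesLt_succ (r : Fin n → ℤ) (i : Fin n) (h : (i : ℕ) + 1 < n) :
    sDesLt s r ⟨i + 1, h⟩ =
      sDesLt s r i + if (r ⟨i + 1, h⟩ : ℚ) / s ⟨i + 1, h⟩ < r i / s i then 1 else 0 := by
  unfold sDesLt
  split_ifs with hd
  · rw [← Set.ncard_insert_of_notMem (a := i) (by simp)]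
    congr 1
    ext j
    simp only [Set.mem_ofPred_eq, Set.mem_insert_iff, Fin.ext_iff]
    grind
  · congr 1
    ext j
    simp only [Set.mem_ofPred_eq]
    grind

lemma sDesLt_of_val_eq_last (r : Fin n → ℤ) {i : Fin n} (hi : (i : ℕ) = n - 1) :
    sDesLt s r i = sDes s r := by
  unfold sDesLt sDes
  congr 1
  ext j
  exact ⟨fun ⟨_, hd⟩ => hd, fun ⟨h, hd⟩ => ⟨by omega, h, hd⟩⟩

lemma sDes_le (r : Fin n → ℤ) : sDes s r ≤ n :=
  (Set.ncard_le_card _).trans (Nat.card_fin n).le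

lemma emod_mem_lhPsi (hs : ∀ i, 0 < s i) (lam : Fin n → ℤ) :
    (fun i => lam i % s i) ∈ lhPsi s := fun i =>
  ⟨Int.emod_nonneg _ (by exact_mod_cast (hs i).ne'), Int.emod_lt_of_pos _ (by exact_mod_cast hs i)⟩

lemma inDilate_add_mul_iff (hs : ∀ i, 0 < s i) (hlast : ∀ i : Fin n, (i : ℕ) = n - 1 → s i = 1)
    (t : ℕ) {r : Fin n → ℤ} (hr : r ∈ lhPsi s) (m : Fin n → ℤ) :
    inDilate s t (fun i => r i + s i * m i) ↔
      (∀ i : Fin n, (i : ℕ) = 0 → 0 ≤ m i) ∧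
      (∀ (i : Fin n) (h : (i : ℕ) + 1 < n),
        m i + (if (r ⟨i + 1, h⟩ : ℚ) / s ⟨i + 1, h⟩ < r i / s i then 1 else 0) ≤ m ⟨i + 1, h⟩) ∧
      (∀ i : Fin n, (i : ℕ) = n - 1 → m i ≤ t) := by
  have hquot : ∀ i, ((r i + s i * m i : ℤ) : ℚ) / s i = m i + r i / s i := fun i => by
    have : (s i : ℚ) ≠ 0 := by exact_mod_cast (hs i).ne'
    push_cast
    field_simp
    ring
  have hfrac : ∀ i, (r i : ℚ) / s i ∈ Set.Ico 0 1 := fun i => by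
    have hsi : (0 : ℚ) < s i := by exact_mod_cast hs i
    exact ⟨div_nonneg (by exact_mod_cast (hr i).1) hsi.le,
      (div_lt_one hsi).2 (by exact_mod_cast (hr i).2)⟩
  simp only [inDilate, hquot]
  refine and_congr (forall₂_congr fun i _ => ?_) (and_congr (forall₂_congr fun i h => ?_)
    (forall₂_congr fun i hi => ?_))
  · simpa [(hfrac i).1.not_gt] using
      intCast_add_le_intCast_add_iff (a := 0) (b := m i) ⟨le_rfl, one_pos⟩ (hfrac i)
  · exact intCast_add_le_intCast_add_iff (hfrac i) (hfrac _) _ _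
  · have hri : r i = 0 := by
      have := hr i
      rw [hlast i hi] at this
      omega
    simp [hri]
    norm_cast

/-- The point `λ` with `λ_i ≡ r_i (mod s_i)` and `⌊λ_i / s_i⌋ = p_i - i + D_i`, where `D_i` is the
number of s-descents of `r` before `i`. -/
noncomputable def lhLift (r p : Fin n → ℤ) : Fin n → ℤ :=
  fun i => r i + s i * (p i - i + sDesLt s r i)

lemma lhLift_injective (hs : ∀ i, 0 < s i) (r : Fin n → ℤ) : Function.Injective (lhLift s r) := by
  intro p q hpq
  funext i
  have := mul_left_cancel₀ (by exact_mod_cast (hs i).ne') (add_left_cancel (congrFun hpq i))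
  omega

lemma inDilate_lhLift_iff (hs : ∀ i, 0 < s i) (hlast : ∀ i : Fin n, (i : ℕ) = n - 1 → s i = 1)
    (t : ℕ) {r : Fin n → ℤ} (hr : r ∈ lhPsi s) (p : Fin n → ℤ) :
    inDilate s t (lhLift s r p) ↔
      StrictMono p ∧ ∀ i, p i ∈ Finset.Ico 0 ((t + n - sDes s r : ℕ) : ℤ) := by
  unfold lhLift
  rw [inDilate_add_mul_iff s hs hlast t hr]
  simp only [Finset.mem_Ico, Fin.strictMono_and_bounded_iff]
  refine and_congr (forall₂_congr fun i hi => ?_) (and_congr (forall₂_congr fun i h => ?_)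
    (forall₂_congr fun i hi => ?_))
  · simp [sDesLt_of_val_eq_zero s r hi, hi]
  · rw [sDesLt_succ]
    push_cast
    split_ifs <;> omega
  · rw [sDesLt_of_val_eq_last s r hi, Nat.cast_sub (by have := sDes_le s r; omega)]
    push_cast
    omega

lemma inDilate_fiber_eq_image (hs : ∀ i, 0 < s i)
    (hlast : ∀ i : Fin n, (i : ℕ) = n - 1 → s i = 1) (t : ℕ) {r : Fin n → ℤ} (hr : r ∈ lhPsi s) :
    {lam | inDilate s t lam ∧ (fun i => lam i % s i) = r} =
      lhLift s r '' {p | StrictMono p ∧ ∀ i, p i ∈ Finset.Ico 0 ((t + n - sDes s r : ℕ) : ℤ)} := by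
  ext lam
  constructor
  · rintro ⟨hlam, rfl⟩
    have hlift : lhLift s (fun i => lam i % s i)
        (fun i => lam i / s i + i - sDesLt s (fun i => lam i % s i) i) = lam := by
      funext i
      simp only [lhLift]
      linear_combination Int.emod_add_mul_ediv (lam i) (s i)
    exact ⟨_, (inDilate_lhLift_iff s hs hlast t hr _).1 (by rwa [hlift]), hlift⟩
  · rintro ⟨p, hp, rfl⟩
    refine ⟨(inDilate_lhLift_iff s hs hlast t hr p).2 hp, funext fun i => ?_⟩
    simp only [lhLift, Int.add_mul_emod_self_left]
    exact Int.emod_eq_of_lt (hr i).1 (hr i).2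

lemma ncard_inDilate_fiber (hs : ∀ i, 0 < s i)
    (hlast : ∀ i : Fin n, (i : ℕ) = n - 1 → s i = 1) (t : ℕ) {r : Fin n → ℤ} (hr : r ∈ lhPsi s) :
    {lam | inDilate s t lam ∧ (fun i => lam i % s i) = r}.ncard = (t + n - sDes s r).choose n := by
  rw [inDilate_fiber_eq_image s hs hlast t hr, (lhLift_injective s hs r).injOn.ncard_image,
    ncard_setOf_strictMono_mem, Int.card_Ico]
  simp

lemma inDilate_fiber_finite (hs : ∀ i, 0 < s i)
    (hlast : ∀ i : Fin n, (i : ℕ) = n - 1 → s i = 1) (t : ℕ) {r : Fin n → ℤ} (hr : r ∈ lhPsi s) :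
    {lam | inDilate s t lam ∧ (fun i => lam i % s i) = r}.Finite := by
  rw [inDilate_fiber_eq_image s hs hlast t hr]
  exact ((Set.Finite.pi' fun _ => Finset.finite_toSet _).subset fun p hp i => hp.2 i).image _

end LectureHall

/-- if `s_n = 1`, the number of lattice points in the `t`-th dilate
of `P_s` equals `∑_{i=0}^n c_i · C(t+n-i,n)` with `c_i = #{r ∈ Ψ_n : des_s(r) = i}`. -/
theorem stmt_10 (n : ℕ) (hn : 0 < n) (s : Fin n → ℕ) (hs : ∀ i, 0 < s i)
    (hlast : s ⟨n - 1, by omega⟩ = 1) (t : ℕ) :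
    Set.ncard {lam : Fin n → ℤ | inDilate s t lam} =
      ∑ i ∈ Finset.range (n + 1),
        Set.ncard {r ∈ lhPsi s | sDes s r = i} * Nat.choose (t + n - i) n := by
  have hlast' : ∀ i : Fin n, (i : ℕ) = n - 1 → s i = 1 := fun i hi =>
    (congrArg s (Fin.ext hi : i = ⟨n - 1, by omega⟩)).trans hlast
  set Ψ : Finset (Fin n → ℤ) := Fintype.piFinset fun i => Finset.Ico 0 (s i : ℤ)
  have hΨ : lhPsi s = Ψ := by ext; simp [lhPsi, Ψ]
  calc Set.ncard {lam : Fin n → ℤ | inDilate s t lam}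
      = ∑ r ∈ Ψ, {lam | inDilate s t lam ∧ (fun i => lam i % s i) = r}.ncard :=
        Set.ncard_eq_sum_ncard_fibers (fun lam _ => hΨ ▸ emod_mem_lhPsi s hs lam)
          fun r hr => inDilate_fiber_finite s hs hlast' t (hΨ ▸ hr)
    _ = ∑ r ∈ Ψ, (t + n - sDes s r).choose n :=
        Finset.sum_congr rfl fun r hr => ncard_inDilate_fiber s hs hlast' t (hΨ ▸ hr)
    _ = ∑ i ∈ Finset.range (n + 1), ∑ r ∈ Ψ with sDes s r = i, (t + n - i).choose n :=
        (Finset.sum_fiberwise_of_maps_to' (fun r _ => Finset.mem_range_succ_iff.2 (sDes_le s r))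
          fun i => (t + n - i).choose n).symm
    _ = _ := by simp [hΨ, ← Finset.coe_filter]
end

section
/- Let n be a positive integer and t a nonnegative integer. Then the number of lattice points λ = (λ_1,…,λ_n) ∈ ℤ^n satisfying 0 ≤ λ_1/n ≤ λ_2/(n−1) ≤ ⋯ ≤ λ_{n−1}/2 ≤ λ_n/1 ≤ t equals (t+1)^n. (That is, the Ehrhart polynomial of the anti-lecture hall polytope P_{(n,n−1,…,2,1)} is the same as that of the n-dimensional unit cube.) -/
/-!
Peeling off the last coordinate `b` of a lattice point of `c • P_s` leaves a lattice point of
`(b / s_last) • P_{s'}`, where `s'` is `s` without its last entry. For `s = (k+m-1, …, k)` the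
truncation `s' = (k+m-1, …, k+1)` has the same shape, so the number `N(k, m, c)` of lattice
points of `c • P_{(k+m-1,…,k)}` satisfies `N(k, m+1, c) = ∑_{b ≤ ⌊k c⌋} N(k+1, m, b / k)`.
Writing `⌊k c⌋ = q k + r` with `r < k`, this recursion is solved by
`∑_j C(k+m-1, j) C(r+m-j, m-j) q^j`: the number `⌊(k+1) b / k⌋ = b + ⌊b / k⌋` has the same
quotient and remainder modulo `k + 1` as `b` modulo `k`, and the sum over `b` telescopes by
Pascal's rule. For `k = 1` and `c = t` the formula is `∑_j C(n, j) t^j = (t+1)^n`.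
-/

open Finset

theorem Fin.monotone_snoc_iff {α : Type*} [Preorder α] {m : ℕ} {f : Fin m → α} {x : α} :
    Monotone (Fin.snoc f x : Fin (m + 1) → α) ↔ Monotone f ∧ ∀ i, f i ≤ x := by
  constructor
  · intro h
    refine ⟨fun i j hij => ?_, fun i => ?_⟩
    · simpa using h (Fin.castSucc_le_castSucc_iff.mpr hij)
    · simpa using h (Fin.castSucc_lt_last i).le
  · rintro ⟨hf, hx⟩ i j hij
    induction j using Fin.lastCases with
    | last => induction i using Fin.lastCases with
      | last => exact le_rfl
      | cast i => simpa using hx i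
    | cast j => induction i using Fin.lastCases with
      | last => exact absurd hij (Fin.castSucc_lt_last j).not_ge
      | cast i => simpa using hf (Fin.castSucc_le_castSucc_iff.mp hij)

section LectureHall

variable {m : ℕ}

def lhRatio (s : Fin m → ℕ) (μ : Fin m → ℤ) (i : Fin m) : ℚ := μ i / s i

structure MemLHDilate (s : Fin m → ℕ) (c : ℚ) (μ : Fin m → ℤ) : Prop where
  nonneg : ∀ i, 0 ≤ μ i
  monotone : Monotone (lhRatio s μ)
  le : ∀ i, lhRatio s μ i ≤ c

lemma lhRatio_snoc (s : Fin (m + 1) → ℕ) (ν : Fin m → ℤ) (b : ℕ) :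
    lhRatio s (Fin.snoc ν (b : ℤ)) =
      Fin.snoc (lhRatio (Fin.init s) ν) ((b : ℚ) / s (Fin.last m)) := by
  funext i
  induction i using Fin.lastCases with
  | last => simp [lhRatio]
  | cast i => simp [lhRatio, Fin.init]

lemma memLHDilate_snoc_iff {s : Fin (m + 1) → ℕ} {c : ℚ} {ν : Fin m → ℤ} {b : ℕ} :
    MemLHDilate s c (Fin.snoc ν (b : ℤ)) ↔
      (b : ℚ) / s (Fin.last m) ≤ c ∧
        MemLHDilate (Fin.init s) ((b : ℚ) / s (Fin.last m)) ν := by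
  constructor
  · intro h
    have hmono := Fin.monotone_snoc_iff.mp (lhRatio_snoc s ν b ▸ h.monotone)
    refine ⟨by simpa [lhRatio_snoc] using h.le (Fin.last m),
      ⟨fun i => by simpa using h.nonneg i.castSucc, hmono.1, hmono.2⟩⟩
  · rintro ⟨hb, hν⟩
    refine ⟨Fin.forall_fin_succ'.mpr ⟨by simpa using hν.nonneg, by simp⟩, ?_, ?_⟩
    · rw [lhRatio_snoc]
      exact Fin.monotone_snoc_iff.mpr ⟨hν.monotone, hν.le⟩
    · rw [lhRatio_snoc, Fin.forall_fin_succ']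
      simpa using ⟨fun i => (hν.le i).trans hb, hb⟩

lemma natCast_div_le_iff_le_floor {s : ℕ} (hs : 0 < s) {c : ℚ} (hc : 0 ≤ c) (b : ℕ) :
    (b : ℚ) / s ≤ c ↔ b ≤ ⌊(s : ℚ) * c⌋₊ := by
  rw [Nat.le_floor_iff (by positivity), div_le_iff₀ (by positivity), mul_comm]

lemma snoc_init_toNat {μ : Fin (m + 1) → ℤ} (h : 0 ≤ μ (Fin.last m)) :
    Fin.snoc (Fin.init μ) ((μ (Fin.last m)).toNat : ℤ) = μ := by
  rw [Int.toNat_of_nonneg h, Fin.snoc_init_self]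

def memLHDilateSnocEquiv (s : Fin (m + 1) → ℕ) (hs : 0 < s (Fin.last m)) {c : ℚ}
    (hc : 0 ≤ c) :
    {μ // MemLHDilate s c μ} ≃
      Σ b : Fin (⌊(s (Fin.last m) : ℚ) * c⌋₊ + 1),
        {ν // MemLHDilate (Fin.init s) (((b : ℕ) : ℚ) / s (Fin.last m)) ν} :=
  Equiv.trans
    { toFun := fun μ =>
        have h := (memLHDilate_snoc_iff (ν := Fin.init μ.1)).mp
          (by rw [snoc_init_toNat (μ.2.nonneg _)]; exact μ.2)
        ⟨(⟨(μ.1 (Fin.last m)).toNat,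
          Nat.lt_succ_of_le ((natCast_div_le_iff_le_floor hs hc _).mp h.1)⟩, Fin.init μ.1), h.2⟩
      invFun := fun p => ⟨Fin.snoc p.1.2 ((p.1.1 : ℕ) : ℤ), memLHDilate_snoc_iff.mpr
        ⟨(natCast_div_le_iff_le_floor hs hc _).mpr (Nat.lt_succ_iff.mp p.1.1.2), p.2⟩⟩
      left_inv := fun μ => Subtype.ext (snoc_init_toNat (μ.2.nonneg _))
      right_inv := fun p => Subtype.ext <|
        Prod.ext (Fin.ext (by simp)) (Fin.init_snoc (α := fun _ => ℤ) _ _) }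
    (Equiv.subtypeProdEquivSigmaSubtype fun (b : Fin (_ + 1)) ν =>
      MemLHDilate (Fin.init s) (((b : ℕ) : ℚ) / s (Fin.last m)) ν)

end LectureHall

def lhCount (k m q r : ℕ) : ℕ :=
  ∑ j ∈ range (m + 1), (k + m - 1).choose j * (r + m - j).choose (m - j) * q ^ j

lemma lhCount_zero_right (k m q : ℕ) :
    lhCount k m q 0 = ∑ j ∈ range (m + 1), (k + m - 1).choose j * q ^ j := by
  refine sum_congr rfl fun j _ => ?_
  rw [zero_add, Nat.choose_self, mul_one]

lemma lhCount_zero_zero (k m : ℕ) : lhCount k m 0 0 = 1 := by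
  simp [lhCount_zero_right, sum_range_succ']

lemma lhCount_pred_right {k : ℕ} (hk : 0 < k) (m q : ℕ) :
    lhCount k m q (k - 1) = (k + m - 1).choose m * (q + 1) ^ m := by
  rw [lhCount, add_pow, mul_sum]
  refine sum_congr rfl fun j hj => ?_
  have hjm : j ≤ m := Nat.lt_succ_iff.mp (mem_range.mp hj)
  rw [show k - 1 + m - j = k + m - 1 - j by omega, ← Nat.choose_mul hjm, Nat.cast_id]
  ring

lemma lhCount_succ_right (k m q r : ℕ) :
    lhCount k (m + 1) q (r + 1) = lhCount k (m + 1) q r + lhCount (k + 1) m q (r + 1) := by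
  simp only [lhCount, show k + (m + 1) - 1 = k + m by omega, show k + 1 + m - 1 = k + m by omega]
  rw [sum_range_succ _ (m + 1), sum_range_succ _ (m + 1),
    add_right_comm _ ((k + m).choose (m + 1) * _ * _), ← sum_add_distrib]
  congr 1
  · refine sum_congr rfl fun j hj => ?_
    have hjm : j < m + 1 := mem_range.mp hj
    rw [show r + 1 + (m + 1) - j = (r + m + 1 - j) + 1 by omega,
      show m + 1 - j = (m - j) + 1 by omega, Nat.choose_succ_succ,
      show r + (m + 1) - j = r + m + 1 - j by omega, show r + 1 + m - j = r + m + 1 - j by omega]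
    ring
  · simp

lemma lhCount_succ_zero {k : ℕ} (hk : 0 < k) (m q : ℕ) :
    lhCount k (m + 1) (q + 1) 0 =
      lhCount k (m + 1) q (k - 1) + lhCount (k + 1) m (q + 1) 0 := by
  rw [lhCount_zero_right, lhCount_zero_right, lhCount_pred_right hk, sum_range_succ,
    show k + 1 + m - 1 = k + (m + 1) - 1 by omega]
  ring

lemma lhCount_succ_div_mod {k : ℕ} (hk : 0 < k) (m a : ℕ) :
    lhCount k (m + 1) ((a + 1) / k) ((a + 1) % k) =
      lhCount k (m + 1) (a / k) (a % k) + lhCount (k + 1) m ((a + 1) / k) ((a + 1) % k) := by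
  obtain ⟨hqr, hr⟩ :=
    (Nat.div_mod_unique (a := a) (d := a / k) (c := a % k) hk).mp ⟨rfl, rfl⟩
  rcases Nat.lt_or_ge (a % k + 1) k with hlt | hge
  · obtain ⟨hq, hr'⟩ := (Nat.div_mod_unique (a := a + 1) (d := a / k)
      (c := a % k + 1) hk).mpr ⟨by omega, hlt⟩
    rw [hq, hr', lhCount_succ_right]
  · obtain ⟨hq, hr'⟩ := (Nat.div_mod_unique (a := a + 1) (d := a / k + 1)
      (c := 0) hk).mpr ⟨by rw [Nat.mul_succ]; omega, hk⟩
    rw [hq, hr', show a % k = k - 1 by omega, lhCount_succ_zero hk]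

lemma sum_lhCount {k : ℕ} (hk : 0 < k) (m a : ℕ) :
    ∑ b ∈ range (a + 1), lhCount (k + 1) m (b / k) (b % k) =
      lhCount k (m + 1) (a / k) (a % k) := by
  induction a with
  | zero => simp [lhCount_zero_zero]
  | succ a ih => rw [sum_range_succ, ih, lhCount_succ_div_mod hk]

lemma lhCount_one (n t : ℕ) : lhCount 1 n t 0 = (t + 1) ^ n := by
  rw [lhCount_zero_right, add_pow]
  refine sum_congr rfl fun j _ => ?_
  rw [Nat.add_sub_cancel_left, one_pow, mul_one, mul_comm, Nat.cast_id]

def antiLectureHallSeq (k m : ℕ) (i : Fin m) : ℕ := k + m - 1 - i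

lemma antiLectureHallSeq_pos {k : ℕ} (hk : 0 < k) (m : ℕ) (i : Fin m) :
    0 < antiLectureHallSeq k m i := by
  have := i.isLt
  unfold antiLectureHallSeq
  omega

lemma init_antiLectureHallSeq (k m : ℕ) :
    Fin.init (antiLectureHallSeq k (m + 1)) = antiLectureHallSeq (k + 1) m := by
  funext i
  simp only [Fin.init, antiLectureHallSeq, Fin.val_castSucc]
  omega

lemma antiLectureHallSeq_last (k m : ℕ) : antiLectureHallSeq k (m + 1) (Fin.last m) = k := by
  simp only [antiLectureHallSeq, Fin.val_last]
  omega

lemma floor_succ_mul_div {k : ℕ} (hk : 0 < k) (b : ℕ) :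
    ⌊((k + 1 : ℕ) : ℚ) * ((b : ℚ) / k)⌋₊ / (k + 1) = b / k ∧
      ⌊((k + 1 : ℕ) : ℚ) * ((b : ℚ) / k)⌋₊ % (k + 1) = b % k := by
  have hfloor : ⌊((k + 1 : ℕ) : ℚ) * ((b : ℚ) / k)⌋₊ = b + b / k := by
    rw [← mul_div_assoc, ← Nat.cast_mul, Nat.floor_div_eq_div, add_one_mul, Nat.mul_add_div hk]
  rw [hfloor, Nat.div_mod_unique (Nat.succ_pos k)]
  have := Nat.mod_add_div b k
  exact ⟨by rw [Nat.succ_mul]; omega, (Nat.mod_lt b hk).trans (Nat.lt_succ_self k)⟩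

theorem nonempty_equiv_fin_lhCount {k : ℕ} (hk : 0 < k) (m : ℕ) {c : ℚ} (hc : 0 ≤ c) :
    Nonempty ({μ : Fin m → ℤ // MemLHDilate (antiLectureHallSeq k m) c μ} ≃
      Fin (lhCount k m (⌊(k : ℚ) * c⌋₊ / k) (⌊(k : ℚ) * c⌋₊ % k))) := by
  induction m generalizing k c with
  | zero =>
    have hone (q r : ℕ) : lhCount k 0 q r = 1 := by simp [lhCount]
    rw [hone]
    have : Unique {μ : Fin 0 → ℤ // MemLHDilate (antiLectureHallSeq k 0) c μ} :=
      { default := ⟨finZeroElim, ⟨finZeroElim, fun i => i.elim0, finZeroElim⟩⟩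
        uniq := fun _ => Subtype.ext (Subsingleton.elim _ _) }
    exact ⟨Equiv.ofUnique _ _⟩
  | succ m ih =>
    have e := memLHDilateSnocEquiv (antiLectureHallSeq k (m + 1))
      ((antiLectureHallSeq_last k m).symm ▸ hk) hc
    rw [init_antiLectureHallSeq, antiLectureHallSeq_last] at e
    have fibre (b : Fin (⌊(k : ℚ) * c⌋₊ + 1)) :
        {ν // MemLHDilate (antiLectureHallSeq (k + 1) m) (((b : ℕ) : ℚ) / k) ν} ≃
          Fin (lhCount (k + 1) m (b / k) (b % k)) := by
      obtain ⟨hq, hr⟩ := floor_succ_mul_div hk b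
      have := ih (Nat.succ_pos k) (c := ((b : ℕ) : ℚ) / k) (by positivity)
      rw [hq, hr] at this
      exact this.some
    refine ⟨e.trans <| (Equiv.sigmaCongrRight fibre).trans <|
      finSigmaFinEquiv.trans (finCongr ?_)⟩
    rw [Fin.sum_univ_eq_sum_range (fun b => lhCount (k + 1) m (b / k) (b % k)), sum_lhCount hk]

lemma inDilate_iff_memLHDilate {n : ℕ} {s : Fin (n + 1) → ℕ} (hs : ∀ i, 0 < s i) (t : ℕ)
    (lam : Fin (n + 1) → ℤ) : inDilate s t lam ↔ MemLHDilate s t lam := by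
  have hchain : (∀ i : Fin (n + 1), ∀ h : (i : ℕ) + 1 < n + 1,
      lhRatio s lam i ≤ lhRatio s lam ⟨i + 1, h⟩) ↔ Monotone (lhRatio s lam) := by
    rw [Fin.monotone_iff_le_succ]
    exact ⟨fun h i => h i.castSucc (by simp), fun h i hi => h ⟨i, by omega⟩⟩
  constructor
  · rintro ⟨h0, hchain', ht⟩
    have hmono := hchain.mp hchain'
    refine ⟨fun i => ?_, hmono, fun i => (hmono (Fin.le_last i)).trans (ht _ (by simp))⟩
    have : 0 ≤ lhRatio s lam i := (h0 0 rfl).trans (hmono (Fin.zero_le i))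
    rw [lhRatio, le_div_iff₀ (by exact_mod_cast hs i), zero_mul] at this
    exact_mod_cast this
  · intro h
    exact ⟨fun i _ => div_nonneg (by exact_mod_cast h.nonneg i) (Nat.cast_nonneg _),
      hchain.mpr h.monotone, fun i _ => h.le i⟩

/-- the Ehrhart polynomial of the anti-lecture hall polytope
`P_{(n,n-1,…,2,1)}` is `(t+1)^n`. -/
theorem stmt_12 (n : ℕ) (hn : 0 < n) (t : ℕ) :
    Set.ncard {lam : Fin n → ℤ | inDilate (fun i : Fin n => n - (i : ℕ)) t lam} =
      (t + 1) ^ n := by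
  obtain ⟨n, rfl⟩ := Nat.exists_eq_add_one_of_ne_zero hn.ne'
  have hs : (fun i : Fin (n + 1) => n + 1 - (i : ℕ)) = antiLectureHallSeq 1 (n + 1) := by
    funext i
    simp only [antiLectureHallSeq]
    omega
  have hset : {lam | inDilate (fun i : Fin (n + 1) => n + 1 - (i : ℕ)) t lam} =
      {lam | MemLHDilate (antiLectureHallSeq 1 (n + 1)) t lam} := by
    ext lam
    rw [hs]
    exact inDilate_iff_memLHDilate (antiLectureHallSeq_pos one_pos _) t lam
  obtain ⟨e⟩ := nonempty_equiv_fin_lhCount one_pos (n + 1) (c := t) (Nat.cast_nonneg t)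
  rw [hset, ← Nat.card_coe_set_eq, ← lhCount_one]
  refine (Nat.card_eq_of_equiv_fin e).trans ?_
  simp [Nat.mod_one]
end

section
/- Let n be a positive integer and let s = (n, n−1, …, 2, 1), i.e., s_i = n+1−i. Then for every nonnegative integer i, ℓ^i(Par_s) = #{ r = (r_1,…,r_n) : r_k ∈ {0,…,n−k} for all k, and r has exactly i descents }; that is, the number of lattice points of Par_s whose last coordinate is i equals the number of inversion sequences of length n with exactly i descents. -/
namespace S13

def rho (n : ℕ) (r : Fin n → ℤ) (k : ℕ) : ℤ := if h : k < n then r ⟨k, h⟩ else 0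

lemma rho_eq {n : ℕ} (r : Fin n → ℤ) (j : Fin n) : rho n r (j : ℕ) = r j := by
  rw [rho, dif_pos j.isLt]

def Dk (n : ℕ) (r : Fin n → ℤ) (m : ℕ) : ℕ :=
  ((Finset.range m).filter (fun k => k + 1 < n ∧ rho n r (k + 1) < rho n r k)).card

lemma Dk_zero {n : ℕ} (r : Fin n → ℤ) : Dk n r 0 = 0 := by simp [Dk]

lemma Dk_succ {n : ℕ} (r : Fin n → ℤ) (m : ℕ) :
    Dk n r (m + 1) = Dk n r m +
      if (m + 1 < n ∧ rho n r (m + 1) < rho n r m) then 1 else 0 := by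
  rw [Dk, Dk, Finset.range_add_one, Finset.filter_insert]
  split
  · rw [Finset.card_insert_of_notMem (by simp)]
  · simp

open Classical in
/-- generic conversion of ncard over Fin sets to a filter over range -/
lemma ncard_fin_set {n : ℕ} (P : Fin n → Prop) :
    Set.ncard {i : Fin n | P i}
      = ((Finset.range n).filter (fun k => ∃ h : k < n, P ⟨k, h⟩)).card := by
  classical
  rw [Set.ncard_eq_toFinset_card', Set.toFinset_setOf]
  refine Finset.card_bij (fun i _ => (i : ℕ)) ?_ ?_ ?_
  · intro a ha
    simp only [Finset.mem_filter, Finset.mem_range]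
    exact ⟨a.isLt, a.isLt, by simpa using ha⟩
  · intro a _ b _ h; exact Fin.val_injective h
  · intro k hk
    simp only [Finset.mem_filter, Finset.mem_range] at hk
    obtain ⟨hkn, h, hP⟩ := hk
    exact ⟨⟨k, h⟩, by simpa using hP, rfl⟩

lemma rDes_eq_Dk {n : ℕ} (r : Fin n → ℤ) : rDes r = Dk n r n := by
  rw [rDes, ncard_fin_set, Dk]
  congr 1
  ext k
  simp only [Finset.mem_filter, Finset.mem_range]
  refine and_congr_right fun hk => ?_
  constructor
  · rintro ⟨hkn, h, hlt⟩
    refine ⟨h, ?_⟩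
    rw [rho, dif_pos h, rho, dif_pos hkn]
    exact hlt
  · rintro ⟨h, hlt⟩
    refine ⟨hk, h, ?_⟩
    rw [rho, dif_pos h, rho, dif_pos hk] at hlt
    exact hlt

lemma Dk_last {n : ℕ} (hn : 0 < n) (r : Fin n → ℤ) : Dk n r n = Dk n r (n - 1) := by
  obtain ⟨m, rfl⟩ : ∃ m, n = m + 1 := ⟨n - 1, by omega⟩
  rw [Dk_succ]
  simp

def Phi (n : ℕ) (r : Fin n → ℤ) : Fin n → ℤ :=
  fun j => r j + ((n - (j : ℕ) : ℕ) : ℤ) * (Dk n r (j : ℕ) : ℤ)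

/-- key arithmetic equivalence -/
lemma key (M a b : ℤ) (ha0 : 0 ≤ a) (hb0 : 0 ≤ b) (hb : b ≤ M - 2) :
    ((b : ℝ) / ((M : ℝ) - 1) < (a : ℝ) / (M : ℝ)) ↔ b < a := by
  have hM : (2 : ℤ) ≤ M := by omega
  have h1 : (0 : ℝ) < (M : ℝ) - 1 := by
    have : (2 : ℝ) ≤ (M : ℝ) := by exact_mod_cast hM
    linarith
  have h2 : (0 : ℝ) < (M : ℝ) := by linarith
  rw [div_lt_div_iff₀ h1 h2]
  constructor
  · intro h
    by_contra hc
    push_neg at hc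
    have hca : (a : ℝ) ≤ (b : ℝ) := by exact_mod_cast hc
    have hb0' : (0 : ℝ) ≤ (b : ℝ) := by exact_mod_cast hb0
    nlinarith
  · intro h
    have h1' : (b : ℝ) + 1 ≤ (a : ℝ) := by exact_mod_cast h
    have hbM : (b : ℝ) ≤ (M : ℝ) - 2 := by exact_mod_cast hb
    nlinarith


lemma sum_lhVec_apply {n : ℕ} (s : Fin n → ℕ) (c : Fin n → ℝ) (i : Fin n) :
    (∑ j, c j • lhVec s j) i = (s i : ℝ) * ∑ j ∈ Finset.Iic i, c j := by
  simp only [Finset.sum_apply, Pi.smul_apply, lhVec, smul_eq_mul, mul_ite, mul_zero]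
  rw [Finset.mul_sum, ← Finset.sum_filter]
  have : Finset.filter (fun j => j ≤ i) Finset.univ = Finset.Iic i := by
    ext j; simp
  rw [this]
  exact Finset.sum_congr rfl fun j _ => mul_comm _ _

lemma sum_Iic_eq_range {n : ℕ} (f : ℕ → ℝ) (i : Fin n) :
    ∑ j ∈ Finset.Iic i, f (j : ℕ) = ∑ k ∈ Finset.range ((i : ℕ) + 1), f k := by
  refine Finset.sum_bij' (fun (j : Fin n) _ => (j : ℕ))
    (fun k hk => (⟨k, by simp at hk; omega⟩ : Fin n)) ?_ ?_ ?_ ?_ ?_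
  · intro a ha; simp at ha ⊢; omega
  · intro k hk; simp only [Finset.mem_range] at hk
    simp only [Finset.mem_Iic, Fin.le_def, Fin.val_mk]; omega
  · intro a ha; simp
  · intro k hk; simp
  · intro a ha; rfl

lemma mem_lhPar_iff {n : ℕ} (s : Fin n → ℕ) (x : Fin n → ℝ) :
    x ∈ lhPar s ↔ ∃ c : Fin n → ℝ, (∀ j, 0 ≤ c j ∧ c j < 1) ∧
      ∀ i : Fin n, x i = (s i : ℝ) * ∑ j ∈ Finset.Iic i, c j := by
  constructor
  · rintro ⟨c, hc, rfl⟩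
    exact ⟨c, hc, fun i => sum_lhVec_apply s c i⟩
  · rintro ⟨c, hc, hx⟩
    refine ⟨c, hc, funext fun i => ?_⟩
    rw [hx i, sum_lhVec_apply]

noncomputable def tN (n : ℕ) (r : Fin n → ℤ) (k : ℕ) : ℝ :=
  (rho n r k : ℝ) / ((n : ℝ) - k) + (Dk n r k : ℝ)

noncomputable def cN (n : ℕ) (r : Fin n → ℤ) : ℕ → ℝ
  | 0 => tN n r 0
  | (m + 1) => tN n r (m + 1) - tN n r m

lemma sum_cN (n : ℕ) (r : Fin n → ℤ) (m : ℕ) :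
    ∑ l ∈ Finset.range (m + 1), cN n r l = tN n r m := by
  induction m with
  | zero => simp [cN]
  | succ m ih => rw [Finset.sum_range_succ, ih, cN]; ring

lemma cN_bounds {n : ℕ} (hn : 0 < n) (r : Fin n → ℤ)
    (hb : ∀ k, k < n → 0 ≤ rho n r k ∧ rho n r k + k < (n : ℤ)) :
    ∀ k, k < n → 0 ≤ cN n r k ∧ cN n r k < 1 := by
  intro k hk
  match k with
  | 0 =>
    have h0 := hb 0 hn
    have hnr : (0 : ℝ) < (n : ℝ) := by exact_mod_cast hn
    have h1 : (0 : ℝ) ≤ (rho n r 0 : ℝ) := by exact_mod_cast h0.1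
    have h2 : (rho n r 0 : ℝ) < (n : ℝ) := by exact_mod_cast (by omega : rho n r 0 < (n:ℤ))
    have ht0 : tN n r 0 = (rho n r 0 : ℝ) / (n : ℝ) := by
      rw [tN, Dk_zero, Nat.cast_zero, sub_zero, add_zero]
    constructor
    · show 0 ≤ tN n r 0
      rw [ht0]
      exact div_nonneg h1 hnr.le
    · show tN n r 0 < 1
      rw [ht0, div_lt_one hnr]
      exact h2
  | (m + 1) =>
    have hm : m < n := by omega
    have ha := hb m hm
    have hbb := hb (m + 1) hk
    set a := rho n r m with ha_def
    set b := rho n r (m + 1) with hb_def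
    set M : ℤ := (n : ℤ) - m with hM_def
    have hM2 : (2 : ℤ) ≤ M := by omega
    have haM : a ≤ M - 1 := by omega
    have hbM : b ≤ M - 2 := by omega
    have hMr : ((M : ℤ) : ℝ) = (n : ℝ) - m := by rw [hM_def]; push_cast; ring
    have hMr1 : ((M : ℤ) : ℝ) - 1 = (n : ℝ) - (m + 1 : ℕ) := by rw [hM_def]; push_cast; ring
    have hMpos : (0 : ℝ) < (M : ℝ) := by exact_mod_cast (by omega : (0:ℤ) < M)
    have hM1pos : (0 : ℝ) < (M : ℝ) - 1 := by
      have : (2 : ℝ) ≤ (M : ℝ) := by exact_mod_cast hM2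
      linarith
    have h0a : (0 : ℝ) ≤ (a : ℝ) := by exact_mod_cast ha.1
    have h0b : (0 : ℝ) ≤ (b : ℝ) := by exact_mod_cast hbb.1
    have haMr : (a : ℝ) ≤ (M : ℝ) - 1 := by exact_mod_cast haM
    have hbMr : (b : ℝ) ≤ (M : ℝ) - 2 := by exact_mod_cast hbM
    have hdkr : (Dk n r (m + 1) : ℝ) =
        (Dk n r m : ℝ) + if b < a then 1 else 0 := by
      rw [Dk_succ r m, if_congr (and_iff_right hk) rfl rfl]
      split <;> push_cast <;> ring
    have hcN : cN n r (m + 1) =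
        ((b : ℝ) / ((M : ℝ) - 1) - (a : ℝ) / (M : ℝ)) + (if b < a then 1 else 0) := by
      show tN n r (m + 1) - tN n r m = _
      rw [tN, tN, hdkr, ← hb_def, ← ha_def, ← hMr1]
      rw [show (n : ℝ) - (m : ℕ) = ((M : ℤ) : ℝ) from hMr.symm]
      push_cast
      ring
    have hkey := key M a b ha.1 hbb.1 hbM
    have hfub : (b : ℝ) / ((M : ℝ) - 1) < 1 := by
      rw [div_lt_one hM1pos]; linarith
    have hfua : (a : ℝ) / (M : ℝ) < 1 := by
      rw [div_lt_one hMpos]; linarith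
    have hflb : (0 : ℝ) ≤ (b : ℝ) / ((M : ℝ) - 1) := by positivity
    have hfla : (0 : ℝ) ≤ (a : ℝ) / (M : ℝ) := by positivity
    rw [hcN]
    by_cases hba : b < a
    · rw [if_pos hba]
      have := hkey.mpr hba
      constructor <;> linarith
    · rw [if_neg hba]
      have := (not_iff_not.mpr hkey).mpr hba
      push_neg at this
      constructor <;> linarith


lemma phi_coord {n : ℕ} (r : Fin n → ℤ) (j : Fin n) :
    ((Phi n r j : ℤ) : ℝ) = ((n - (j : ℕ) : ℕ) : ℝ) * tN n r (j : ℕ) := by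
  have hj : (j : ℕ) < n := j.isLt
  have hcast : ((n - (j : ℕ) : ℕ) : ℝ) = (n : ℝ) - (j : ℕ) := by
    rw [Nat.cast_sub hj.le]
  have hne : (n : ℝ) - (j : ℕ) ≠ 0 := by
    have : ((j:ℕ) : ℝ) < (n : ℝ) := by exact_mod_cast hj
    linarith
  rw [hcast, tN, mul_add, mul_div_cancel₀ _ hne, Phi, rho_eq]
  push_cast [Nat.cast_sub hj.le]
  ring

theorem test_phi_mem {n : ℕ} (hn : 0 < n) (r : Fin n → ℤ)
    (hr : ∀ k : Fin n, 0 ≤ r k ∧ r k + ((k : ℕ) : ℤ) < (n : ℤ)) :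
    (fun k => ((Phi n r k : ℤ) : ℝ)) ∈ lhPar (fun j : Fin n => n - (j : ℕ)) := by
  have hb : ∀ k, k < n → 0 ≤ rho n r k ∧ rho n r k + k < (n : ℤ) := by
    intro k hk
    have := hr ⟨k, hk⟩
    rw [rho, dif_pos hk]
    exact this
  rw [mem_lhPar_iff]
  refine ⟨fun j => cN n r (j : ℕ), fun j => cN_bounds hn r hb (j : ℕ) j.isLt, ?_⟩
  intro i
  rw [sum_Iic_eq_range (cN n r) i, sum_cN, phi_coord]

theorem test_phi_last {n : ℕ} (hn : 0 < n) (r : Fin n → ℤ)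
    (hr : ∀ k : Fin n, 0 ≤ r k ∧ r k + ((k : ℕ) : ℤ) < (n : ℤ)) :
    ∀ j : Fin n, (j : ℕ) = n - 1 → Phi n r j = (rDes r : ℤ) := by
  intro j hj
  have h1 : r j = 0 := by
    have := hr j
    omega
  have h2 : n - (j : ℕ) = 1 := by omega
  rw [Phi, h1, h2, rDes_eq_Dk, Dk_last hn, hj]
  ring


lemma phi_inj {n : ℕ} (r r' : Fin n → ℤ)
    (hr : ∀ k : Fin n, 0 ≤ r k ∧ r k + ((k : ℕ) : ℤ) < (n : ℤ))
    (hr' : ∀ k : Fin n, 0 ≤ r' k ∧ r' k + ((k : ℕ) : ℤ) < (n : ℤ))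
    (h : Phi n r = Phi n r') : r = r' := by
  have hb : ∀ k (hk : k < n), 0 ≤ rho n r k ∧ rho n r k + k < (n : ℤ) := by
    intro k hk; have := hr ⟨k, hk⟩; rw [rho, dif_pos hk]; exact this
  have hb' : ∀ k (hk : k < n), 0 ≤ rho n r' k ∧ rho n r' k + k < (n : ℤ) := by
    intro k hk; have := hr' ⟨k, hk⟩; rw [rho, dif_pos hk]; exact this
  have aux : ∀ k, k < n → rho n r k = rho n r' k ∧ Dk n r k = Dk n r' k := by
    intro k
    induction k with
    | zero =>
      intro hk
      have heq := congrFun h ⟨0, hk⟩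
      rw [Phi, Phi] at heq
      simp only [Fin.val_mk, Dk_zero, Nat.cast_zero, mul_zero, add_zero] at heq
      refine ⟨?_, by rw [Dk_zero, Dk_zero]⟩
      rw [rho, dif_pos hk, rho, dif_pos hk]
      exact heq
    | succ m ih =>
      intro hk
      have hm := ih (by omega)
      have heq := congrFun h ⟨m + 1, hk⟩
      rw [Phi, Phi] at heq
      simp only [Fin.val_mk] at heq
      rw [show (r ⟨m+1, hk⟩) = rho n r (m+1) from (by rw [rho, dif_pos hk]),
          show (r' ⟨m+1, hk⟩) = rho n r' (m+1) from (by rw [rho, dif_pos hk])] at heq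
      have hD : Dk n r (m+1) = Dk n r m ∨ Dk n r (m+1) = Dk n r m + 1 := by
        rw [Dk_succ]; split <;> simp
      have hD' : Dk n r' (m+1) = Dk n r' m ∨ Dk n r' (m+1) = Dk n r' m + 1 := by
        rw [Dk_succ]; split <;> simp
      rw [← hm.2] at hD'
      have hu := hb (m+1) hk
      have hu' := hb' (m+1) hk
      have hX : ((n - (m+1) : ℕ) : ℤ) = (n : ℤ) - (m + 1 : ℕ) := by
        rw [Nat.cast_sub hk.le]
      rcases hD with h1 | h1 <;> rcases hD' with h2 | h2 <;>
        rw [h1, h2] at heq ⊢ <;>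
        [skip; skip; skip; skip] <;>
        push_cast [hX] at heq hu hu' <;>
        constructor <;> first
          | rfl
          | (exact hm.2)
          | linarith
  funext j
  have := (aux (j : ℕ) j.isLt).1
  rwa [rho_eq, rho_eq] at this


lemma phi_surj {n : ℕ} (hn : 0 < n) (x : Fin n → ℤ)
    (hx : (fun k => (x k : ℝ)) ∈ lhPar (fun j : Fin n => n - (j : ℕ))) :
    ∃ r : Fin n → ℤ, (∀ k : Fin n, 0 ≤ r k ∧ r k + ((k : ℕ) : ℤ) < (n : ℤ)) ∧
      Phi n r = x := by
  rw [mem_lhPar_iff] at hx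
  obtain ⟨c, hc, hxc⟩ := hx
  set cc : ℕ → ℝ := fun l => if h : l < n then c ⟨l, h⟩ else 0 with hcc_def
  set T : ℕ → ℝ := fun k => ∑ l ∈ Finset.range (k + 1), cc l with hT_def
  have hccb : ∀ l, l < n → 0 ≤ cc l ∧ cc l < 1 := by
    intro l hl
    simp only [hcc_def, dif_pos hl]
    exact hc ⟨l, hl⟩
  have hccnn : ∀ l, 0 ≤ cc l := by
    intro l
    by_cases hl : l < n
    · exact (hccb l hl).1
    · simp [hcc_def, dif_neg hl]
  have hT0 : T 0 = cc 0 := by simp [hT_def]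
  have hTsucc : ∀ k, T (k + 1) = T k + cc (k + 1) := by
    intro k
    simp only [hT_def]
    rw [Finset.sum_range_succ]
  have hT : ∀ (k) (hk : k < n), (x ⟨k, hk⟩ : ℝ) = ((n : ℝ) - k) * T k := by
    intro k hk
    have h1 := hxc ⟨k, hk⟩
    have h2 : ∑ j ∈ Finset.Iic (⟨k, hk⟩ : Fin n), c j
        = ∑ j ∈ Finset.Iic (⟨k, hk⟩ : Fin n), cc (j : ℕ) := by
      refine Finset.sum_congr rfl fun j _ => ?_
      simp [hcc_def, dif_pos j.isLt]
    rw [h2, sum_Iic_eq_range cc ⟨k, hk⟩] at h1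
    have h3 : (((n - (k : ℕ) : ℕ) : ℕ) : ℝ) = (n : ℝ) - k := by
      rw [Nat.cast_sub hk.le]
    simp only [Fin.val_mk] at h1
    rw [h1, h3]
  set A : ℕ → ℤ := fun k => ⌊T k⌋ with hA_def
  set r : Fin n → ℤ := fun j => x j - ((n - (j : ℕ) : ℕ) : ℤ) * A (j : ℕ) with hr_def
  have hrho : ∀ (k) (hk : k < n),
      rho n r k = x ⟨k, hk⟩ - ((n - k : ℕ) : ℤ) * A k := by
    intro k hk
    rw [rho, dif_pos hk]
  have heqf : ∀ (k) (hk : k < n),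
      (rho n r k : ℝ) = ((n : ℝ) - k) * (T k - (A k : ℝ)) := by
    intro k hk
    rw [hrho k hk]
    push_cast [Nat.cast_sub hk.le]
    rw [hT k hk]
    ring
  have hnk : ∀ (k : ℕ), k < n → (0 : ℝ) < (n : ℝ) - k := by
    intro k hk
    have : ((k : ℕ) : ℝ) < (n : ℝ) := by exact_mod_cast hk
    linarith
  have hfr01 : ∀ (k : ℕ), (0 : ℝ) ≤ T k - (A k : ℝ) ∧ T k - (A k : ℝ) < 1 := by
    intro k
    constructor
    · have := Int.floor_le (T k); simp only [hA_def]; linarith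
    · have := Int.lt_floor_add_one (T k); simp only [hA_def]; push_cast; linarith
  have hbnd : ∀ (k) (hk : k < n), 0 ≤ rho n r k ∧ rho n r k + k < (n : ℤ) := by
    intro k hk
    have h1 := heqf k hk
    have h2 := hfr01 k
    have h3 := hnk k hk
    have hge : (0 : ℝ) ≤ (rho n r k : ℝ) := by
      rw [h1]; exact mul_nonneg h3.le h2.1
    have hlt : (rho n r k : ℝ) < (n : ℝ) - k := by
      rw [h1]
      calc ((n : ℝ) - k) * (T k - (A k : ℝ)) < ((n : ℝ) - k) * 1 := by
            exact mul_lt_mul_of_pos_left h2.2 h3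
        _ = (n : ℝ) - k := mul_one _
    constructor
    · exact_mod_cast hge
    · have : (rho n r k : ℝ) + (k : ℝ) < (n : ℝ) := by linarith
      exact_mod_cast this
  have hA0 : A 0 = 0 := by
    simp only [hA_def]
    rw [Int.floor_eq_zero_iff]
    rw [hT0]
    exact Set.mem_Ico.mpr (hccb 0 hn)
  have hAstep : ∀ k, k + 1 < n →
      A (k + 1) = A k + (if rho n r (k + 1) < rho n r k then 1 else 0) := by
    intro k hk
    have hkn : k < n := by omega
    have hcb := hccb (k + 1) hk
    have hmono : A k ≤ A (k + 1) := by
      simp only [hA_def]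
      apply Int.floor_le_floor
      rw [hTsucc]
      linarith [hcb.1]
    have hub : A (k + 1) ≤ A k + 1 := by
      have h1 : T (k + 1) < ((A k + 2 : ℤ) : ℝ) := by
        rw [hTsucc]
        have := Int.lt_floor_add_one (T k)
        simp only [hA_def]
        push_cast
        push_cast at this
        linarith [hcb.2]
      have := Int.floor_lt.mpr h1
      simp only [hA_def] at this ⊢
      omega
    -- divisions
    set M : ℤ := (n : ℤ) - k with hM_def
    have hMr : ((M : ℤ) : ℝ) = (n : ℝ) - k := by rw [hM_def]; push_cast; ring
    have hMr1 : ((M : ℤ) : ℝ) - 1 = (n : ℝ) - (k + 1 : ℕ) := by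
      rw [hM_def]; push_cast; ring
    have hMpos : (0 : ℝ) < ((M : ℤ) : ℝ) := by rw [hMr]; exact hnk k hkn
    have hM1pos : (0 : ℝ) < ((M : ℤ) : ℝ) - 1 := by rw [hMr1]; exact hnk (k+1) hk
    have hda : (rho n r k : ℝ) / ((M : ℤ) : ℝ) = T k - (A k : ℝ) := by
      rw [show ((rho n r k : ℤ) : ℝ) = ((M : ℤ) : ℝ) * (T k - (A k : ℝ)) from by
        rw [hMr]; exact heqf k hkn]
      exact mul_div_cancel_left₀ _ (ne_of_gt hMpos)
    have hdb : (rho n r (k+1) : ℝ) / (((M : ℤ) : ℝ) - 1) = T (k+1) - (A (k+1) : ℝ) := by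
      rw [show ((rho n r (k+1) : ℤ) : ℝ) = (((M : ℤ) : ℝ) - 1) * (T (k+1) - (A (k+1) : ℝ)) from by
        rw [hMr1]; exact heqf (k+1) hk]
      exact mul_div_cancel_left₀ _ (ne_of_gt hM1pos)
    have hkey := key M (rho n r k) (rho n r (k+1)) (hbnd k hkn).1 (hbnd (k+1) hk).1
      (by have := (hbnd (k+1) hk).2; push_cast at this ⊢; omega)
    rw [hda, hdb] at hkey
    by_cases hd : rho n r (k + 1) < rho n r k
    · rw [if_pos hd]
      have hlt := hkey.mpr hd
      -- A (k+1) must be A k + 1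
      by_contra hne
      have hAe : A (k + 1) = A k := by omega
      rw [hAe] at hlt
      have : T k ≤ T (k + 1) := by rw [hTsucc]; linarith [hcb.1]
      linarith
    · rw [if_neg hd]
      have hge : ¬ (T (k+1) - (A (k+1) : ℝ) < T k - (A k : ℝ)) :=
        fun hcon => hd (hkey.mp hcon)
      push_neg at hge
      by_contra hne
      have hAe : A (k + 1) = A k + 1 := by omega
      rw [hAe] at hge
      push_cast at hge
      have : T k + 1 ≤ T (k + 1) := by linarith
      rw [hTsucc] at this
      linarith [hcb.2]
  have hAD : ∀ k, k < n → A k = (Dk n r k : ℤ) := by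
    intro k
    induction k with
    | zero => intro _; rw [hA0, Dk_zero]; rfl
    | succ m ih =>
      intro hk
      rw [hAstep m hk, ih (by omega), Dk_succ r m, if_congr (and_iff_right hk) rfl rfl]
      push_cast
      split <;> ring
  have hrb : ∀ k : Fin n, 0 ≤ r k ∧ r k + ((k : ℕ) : ℤ) < (n : ℤ) := by
    intro k
    have := hbnd (k : ℕ) k.isLt
    rwa [rho_eq] at this
  refine ⟨r, hrb, ?_⟩
  funext j
  have hj := j.isLt
  rw [Phi, ← hAD (j : ℕ) hj]
  simp only [hr_def]
  ring

end S13

/-- for `s = (n,n-1,…,2,1)`, `ℓ^i(Par_s)` equals the number of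
inversion sequences of length `n` with exactly `i` descents. -/
theorem stmt_13 (n : ℕ) (hn : 0 < n) (i : ℕ) :
    lhEll (lhPar (fun j : Fin n => n - (j : ℕ))) i =
      Set.ncard {r : Fin n → ℤ |
        (∀ k : Fin n, 0 ≤ r k ∧ r k + ((k : ℕ) : ℤ) < (n : ℤ)) ∧ rDes r = i} := by
  classical
  set R : Set (Fin n → ℤ) :=
    {r | (∀ k : Fin n, 0 ≤ r k ∧ r k + ((k : ℕ) : ℤ) < (n : ℤ)) ∧ rDes r = i} with hR
  have hinj : Set.InjOn (S13.Phi n) R := fun r hr r' hr' h =>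
    S13.phi_inj r r' hr.1 hr'.1 h
  have himg : {x : Fin n → ℤ | (fun k => (x k : ℝ)) ∈ lhPar (fun j : Fin n => n - (j : ℕ)) ∧
      ∀ j : Fin n, (j : ℕ) = n - 1 → x j = (i : ℤ)} = S13.Phi n '' R := by
    ext x
    constructor
    · rintro ⟨hx1, hx2⟩
      obtain ⟨r, hrb, hPhi⟩ := S13.phi_surj hn x hx1
      refine ⟨r, ⟨hrb, ?_⟩, hPhi⟩
      have hlast := S13.test_phi_last hn r hrb ⟨n - 1, by omega⟩ rfl
      rw [hPhi] at hlast
      have h2 := hx2 ⟨n - 1, by omega⟩ rfl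
      have : (rDes r : ℤ) = (i : ℤ) := hlast.symm.trans h2
      exact_mod_cast this
    · rintro ⟨r, ⟨hrb, hrd⟩, rfl⟩
      refine ⟨S13.test_phi_mem hn r hrb, ?_⟩
      intro j hj
      rw [S13.test_phi_last hn r hrb j hj, hrd]
  unfold lhEll
  rw [himg, Set.ncard_image_of_injOn hinj]
end

section
/- Let s = (s_1,…,s_n) be a sequence of positive integers and let u = (u_1,…,u_n) = (s_n,…,s_1) be its reverse. For every nonnegative integer t, the number of lattice points λ ∈ ℤ^n with 0 ≤ λ_1/s_1 ≤ ⋯ ≤ λ_n/s_n ≤ t equals the number of lattice points μ ∈ ℤ^n with 0 ≤ μ_1/u_1 ≤ ⋯ ≤ μ_n/u_n ≤ t. (That is, the lecture hall polytopes P_s and P_u have the same Ehrhart polynomial.) -/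
/-! The affine involution `λ ↦ (t s_{n+1-i} - λ_{n+1-i})_i` maps `t P_s ∩ ℤ^n` onto
`t P_u ∩ ℤ^n`: it turns each ratio `λ_j / s_j` into `t - λ_j / s_j` and reverses their order,
so the chain `0 ≤ λ_1/s_1 ≤ ⋯ ≤ λ_n/s_n ≤ t` becomes the chain defining `t P_u`. -/

open Fin

section LectureHallFlip

variable {n : ℕ}

def lhFlip (s : Fin n → ℕ) (t : ℕ) (lam : Fin n → ℤ) : Fin n → ℤ :=
  fun i => t * s (rev i) - lam (rev i)

lemma lhFlip_div (s : Fin n → ℕ) (hs : ∀ i, 0 < s i) (t : ℕ) (lam : Fin n → ℤ) (i : Fin n) :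
    (lhFlip s t lam i : ℚ) / s (rev i) = t - (lam (rev i) : ℚ) / s (rev i) := by
  have : (s (rev i) : ℚ) ≠ 0 := by exact_mod_cast (hs _).ne'
  simp only [lhFlip]
  push_cast
  field_simp

lemma inDilate_lhFlip {s : Fin n → ℕ} (hs : ∀ i, 0 < s i) {t : ℕ} {lam : Fin n → ℤ}
    (h : inDilate s t lam) : inDilate (fun i => s (rev i)) t (lhFlip s t lam) := by
  obtain ⟨h_first, h_step, h_last⟩ := h
  refine ⟨fun i hi => ?_, fun i hi => ?_, fun i hi => ?_⟩
  · have := h_last (rev i) (by rw [val_rev]; omega)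
    rw [lhFlip_div s hs]
    linarith
  · set j := rev (⟨i + 1, hi⟩ : Fin n) with hj
    have hj_val : (j : ℕ) = n - (i + 2) := by simp only [hj, val_rev]
    have hj_succ : j + 1 < n := by omega
    have hrev_i : (⟨j + 1, hj_succ⟩ : Fin n) = rev i := by
      ext; simp only [val_rev]; omega
    have := h_step j hj_succ
    rw [hrev_i] at this
    rw [lhFlip_div s hs, lhFlip_div s hs]
    linarith
  · have := h_first (rev i) (by rw [val_rev]; omega)
    rw [lhFlip_div s hs]
    linarith

lemma lhFlip_rev_lhFlip (s : Fin n → ℕ) (t : ℕ) (lam : Fin n → ℤ) :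
    lhFlip (fun i => s (rev i)) t (lhFlip s t lam) = lam := by
  ext i; simp [lhFlip]

lemma lhFlip_lhFlip_rev (s : Fin n → ℕ) (t : ℕ) (mu : Fin n → ℤ) :
    lhFlip s t (lhFlip (fun i => s (rev i)) t mu) = mu := by
  ext i; simp [lhFlip]

def lhFlipEquiv (s : Fin n → ℕ) (t : ℕ) : (Fin n → ℤ) ≃ (Fin n → ℤ) where
  toFun := lhFlip s t
  invFun := lhFlip (fun i => s (rev i)) t
  left_inv := lhFlip_rev_lhFlip s t
  right_inv := lhFlip_lhFlip_rev s t

lemma image_lhFlipEquiv {s : Fin n → ℕ} (hs : ∀ i, 0 < s i) (t : ℕ) :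
    lhFlipEquiv s t '' {lam | inDilate s t lam} = {mu | inDilate (fun i => s (rev i)) t mu} := by
  rw [Equiv.image_eq_preimage_symm]
  ext mu
  change inDilate s t (lhFlip (fun i => s (rev i)) t mu) ↔ _
  refine ⟨fun h => ?_, fun h => ?_⟩
  · simpa only [lhFlip_lhFlip_rev, Set.mem_ofPred_eq] using inDilate_lhFlip hs h
  · have h_rev : (fun i => (fun j => s (rev j)) (rev i)) = s := by ext i; simp
    simpa only [h_rev] using inDilate_lhFlip (fun i => hs (rev i)) h

end LectureHallFlip

/-- `P_s` and `P_u` (with `u` the reverse of `s`) have the same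
number of lattice points in their `t`-th dilates. -/
theorem stmt_14 (n : ℕ) (s : Fin n → ℕ) (hs : ∀ i, 0 < s i) (t : ℕ) :
    Set.ncard {lam : Fin n → ℤ | inDilate s t lam} =
      Set.ncard {mu : Fin n → ℤ | inDilate (fun i => s (Fin.rev i)) t mu} := by
  rw [← image_lhFlipEquiv hs t, Set.ncard_image_of_injective _ (lhFlipEquiv s t).injective]
end

section
/- Let s = (s_1,…,s_n) be a sequence of positive integers, let u = (s_n,…,s_1) be its reverse, and let s* = (s_1,…,s_n,1), u* = (u_1,…,u_n,1). For every r ∈ Ψ_n = {0,…,s_1−1} × ⋯ × {0,…,s_n−1}, des_{s*}(r_1,…,r_n,0) = des_{u*}(z_n, z_{n−1}, …, z_1, 0), where z_i = (−r_i) mod s_i (i.e., z_i is the unique element of {0,…,s_i−1} with r_i + z_i ≡ 0 mod s_i). In other words, des_{s*}(r,0) = des_{u*}(reverse(Φ_s(r)),0). -/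
lemma sDes_eq_sum {N : ℕ} (s : Fin N → ℕ) (r : Fin N → ℤ) :
    sDes s r = ∑ i : Fin N, (if h : (i:ℕ)+1 < N then
      (if (r ⟨(i:ℕ)+1,h⟩ : ℚ)/(s ⟨(i:ℕ)+1,h⟩:ℚ) < (r i:ℚ)/(s i:ℚ) then 1 else 0) else 0) := by
  classical
  rw [sDes, Set.ncard_eq_toFinset_card', Set.toFinset_setOf, Finset.card_filter]
  refine Finset.sum_congr rfl fun i _ => ?_
  by_cases h : (i:ℕ)+1 < N
  · rw [dif_pos h]
    by_cases hlt : (r ⟨(i:ℕ)+1,h⟩ : ℚ)/(s ⟨(i:ℕ)+1,h⟩:ℚ) < (r i:ℚ)/(s i:ℚ)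
    · rw [if_pos hlt, if_pos ⟨h, hlt⟩]
    · rw [if_neg hlt, if_neg (by rintro ⟨hh, p⟩; exact hlt p)]
  · rw [dif_neg h, if_neg]
    rintro ⟨hh, -⟩; exact h hh

lemma sDes_snoc {n : ℕ} (s : Fin n → ℕ) (r : Fin n → ℤ) :
    sDes (Fin.snoc s 1) (Fin.snoc r (0:ℤ)) =
    ∑ i : Fin n, (if h : (i:ℕ)+1 < n then
        (if (r ⟨(i:ℕ)+1,h⟩ : ℚ)/(s ⟨(i:ℕ)+1,h⟩:ℚ) < (r i:ℚ)/(s i:ℚ) then 1 else 0)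
      else (if (0:ℚ) < (r i:ℚ)/(s i:ℚ) then 1 else 0)) := by
  classical
  rw [sDes_eq_sum, Fin.sum_univ_castSucc, dif_neg (by simp), add_zero]
  refine Finset.sum_congr rfl fun i _ => ?_
  have h1 : ((i.castSucc : Fin (n+1)):ℕ) + 1 < n + 1 := by
    have := i.isLt; simp only [Fin.coe_castSucc]; omega
  rw [dif_pos h1]
  by_cases h : (i:ℕ)+1 < n
  · rw [dif_pos h]
    have e1 : (⟨((i.castSucc : Fin (n+1)):ℕ)+1, h1⟩ : Fin (n+1)) = Fin.castSucc ⟨(i:ℕ)+1, h⟩ := by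
      apply Fin.ext; simp
    rw [e1, Fin.snoc_castSucc, Fin.snoc_castSucc, Fin.snoc_castSucc, Fin.snoc_castSucc]
  · rw [dif_neg h]
    have e1 : (⟨((i.castSucc : Fin (n+1)):ℕ)+1, h1⟩ : Fin (n+1)) = Fin.last n := by
      apply Fin.ext; have := i.isLt; simp only [Fin.coe_castSucc, Fin.val_last]; omega
    rw [e1, Fin.snoc_castSucc, Fin.snoc_castSucc, Fin.snoc_last, Fin.snoc_last]
    norm_num

lemma core_ineq (a b a' b' : ℚ) (ha1 : a < 1) (hb1 : b < 1)
    (ha' : (a = 0 ∧ a' = 0) ∨ (0 < a ∧ a' = 1 - a))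
    (hb' : (b = 0 ∧ b' = 0) ∨ (0 < b ∧ b' = 1 - b)) :
    ((if b < a then 1 else 0) : ℕ) + (if 0 < b then 1 else 0)
      = (if a' < b' then 1 else 0) + (if 0 < a then 1 else 0) := by
  rcases ha' with ⟨h1, h2⟩ | ⟨h1, h2⟩ <;> rcases hb' with ⟨g1, g2⟩ | ⟨g1, g2⟩ <;>
    subst h2 <;> subst g2 <;> split_ifs <;> first | rfl | (exfalso; linarith)

lemma sum_eq {n : ℕ} (x y : Fin n → ℚ)
    (hx : ∀ j, 0 ≤ x j ∧ x j < 1)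
    (hy : ∀ j, (x j = 0 ∧ y j = 0) ∨ (0 < x j ∧ y j = 1 - x j)) :
    ∑ i : Fin n, (if h : (i:ℕ)+1 < n then (if x ⟨(i:ℕ)+1,h⟩ < x i then 1 else 0)
        else (if 0 < x i then 1 else 0)) =
    ∑ i : Fin n, (if h : (i:ℕ)+1 < n then
        (if y (Fin.rev ⟨(i:ℕ)+1,h⟩) < y (Fin.rev i) then 1 else 0)
      else (if 0 < y (Fin.rev i) then 1 else 0)) := by
  classical
  rcases Nat.eq_zero_or_pos n with h0 | npos
  · subst h0; simp
  have : NeZero n := ⟨npos.ne'⟩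
  set A : Fin n → ℕ := fun i => (if h : (i:ℕ)+1 < n then (if x ⟨(i:ℕ)+1,h⟩ < x i then 1 else 0)
        else (if 0 < x i then 1 else 0)) with hA
  set B : Fin n → ℕ := fun i => (if h : (i:ℕ)+1 < n then
        (if y (Fin.rev ⟨(i:ℕ)+1,h⟩) < y (Fin.rev i) then 1 else 0)
      else (if 0 < y (Fin.rev i) then 1 else 0)) with hB
  set c : Fin n → ℕ := fun j => if 0 < x j then 1 else 0 with hc
  have hcy : ∀ j, (if 0 < y j then 1 else 0) = c j := by
    intro j
    rcases hy j with ⟨h1, h2⟩ | ⟨h1, h2⟩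
    · rw [hc]; simp only [h1, h2, lt_irrefl, if_false]
    · rw [hc]; simp only [if_pos h1, if_pos (by have := (hx j).2; linarith : (0:ℚ) < y j)]
  have key : ∀ i : Fin n, A i + c (i+1) = B (Fin.rev (i+1)) + c i := by
    intro i
    have hiv := i.isLt
    by_cases hn : (i:ℕ)+1 < n
    · have hi1 : ((i+1 : Fin n) : ℕ) = (i:ℕ)+1 := by
        rw [Fin.val_add, Fin.val_one', Nat.mod_eq_of_lt (by omega : 1 < n),
          Nat.mod_eq_of_lt hn]
      have e1 : (i+1 : Fin n) = ⟨(i:ℕ)+1, hn⟩ := Fin.ext hi1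
      have hj : ((Fin.rev (i+1) : Fin n) : ℕ) = n - (i:ℕ) - 2 := by
        rw [Fin.val_rev, hi1]; omega
      have hj1 : ((Fin.rev (i+1) : Fin n) : ℕ) + 1 < n := by omega
      have e2 : Fin.rev (⟨((Fin.rev (i+1) : Fin n) : ℕ) + 1, hj1⟩ : Fin n) = i := by
        apply Fin.ext; rw [Fin.val_rev]; simp only []; omega
      have e3 : Fin.rev (Fin.rev (i+1)) = (⟨(i:ℕ)+1, hn⟩ : Fin n) := by
        rw [Fin.rev_rev, e1]
      rw [hA, hB]
      simp only []
      rw [dif_pos hn, dif_pos hj1, e2, e3, e1, hc]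
      simp only []
      exact core_ineq (x i) (x ⟨(i:ℕ)+1, hn⟩) (y i) (y ⟨(i:ℕ)+1, hn⟩)
        (hx i).2 (hx ⟨(i:ℕ)+1, hn⟩).2 (hy i) (hy ⟨(i:ℕ)+1, hn⟩)
    · have hi1 : ((i+1 : Fin n) : ℕ) = 0 := by
        rw [Fin.val_add, Fin.val_one']
        rcases Nat.lt_or_ge 1 n with h | h
        · rw [Nat.mod_eq_of_lt h]
          have hin : (i:ℕ) + 1 = n := by omega
          rw [hin, Nat.mod_self]
        · have hn1 : n = 1 := by omega
          subst hn1; omega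
      have hrev : Fin.rev (i+1) = i := by
        apply Fin.ext; rw [Fin.val_rev, hi1]; omega
      have hrevi : Fin.rev i = i+1 := by
        apply Fin.ext; rw [Fin.val_rev, hi1]; omega
      rw [hrev, hA, hB]
      simp only []
      rw [dif_neg hn, dif_neg hn, hrevi, hcy (i+1)]
      simp only [hc]
      omega
  have h1 : ∑ i : Fin n, (A i + c (i+1)) = ∑ i : Fin n, (B (Fin.rev (i+1)) + c i) :=
    Finset.sum_congr rfl fun i _ => key i
  rw [Finset.sum_add_distrib, Finset.sum_add_distrib] at h1
  have h2 : ∑ i : Fin n, c (i+1) = ∑ i : Fin n, c i :=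
    Fintype.sum_equiv (Equiv.addRight (1 : Fin n)) _ _ (fun i => by
      simp [Equiv.coe_addRight])
  have h3 : ∑ i : Fin n, B (Fin.rev (i+1)) = ∑ i : Fin n, B i :=
    Fintype.sum_equiv ((Equiv.addRight (1 : Fin n)).trans (Fin.revPerm)) _ _ (fun i => by
      simp [Equiv.coe_addRight])
  rw [h2, h3] at h1
  exact Nat.add_right_cancel h1

/-- `des_{s*}(r,0) = des_{u*}(reverse(Φ_s(r)),0)`, where `z = Φ_s(r)`
is determined by `z_i ∈ {0,…,s_i−1}` and `r_i + z_i ≡ 0 (mod s_i)`. -/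
theorem stmt_15 (n : ℕ) (s : Fin n → ℕ) (hs : ∀ i, 0 < s i)
    (r : Fin n → ℤ) (hr : r ∈ lhPsi s)
    (z : Fin n → ℤ)
    (hz : ∀ i, 0 ≤ z i ∧ z i < (s i : ℤ) ∧ (r i + z i) % (s i : ℤ) = 0) :
    sDes (Fin.snoc s 1) (Fin.snoc r (0 : ℤ)) =
      sDes (Fin.snoc (fun i => s (Fin.rev i)) 1)
        (Fin.snoc (fun i => z (Fin.rev i)) (0 : ℤ)) := by
  rw [sDes_snoc, sDes_snoc]
  have hx : ∀ j, 0 ≤ (r j:ℚ)/(s j:ℚ) ∧ (r j:ℚ)/(s j:ℚ) < 1 := by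
    intro j
    have hsq : (0:ℚ) < (s j:ℚ) := by exact_mod_cast hs j
    obtain ⟨h1, h2⟩ := hr j
    constructor
    · apply div_nonneg _ hsq.le; exact_mod_cast h1
    · rw [div_lt_one hsq]; exact_mod_cast h2
  have hy : ∀ j, ((r j:ℚ)/(s j:ℚ) = 0 ∧ (z j:ℚ)/(s j:ℚ) = 0) ∨
      (0 < (r j:ℚ)/(s j:ℚ) ∧ (z j:ℚ)/(s j:ℚ) = 1 - (r j:ℚ)/(s j:ℚ)) := by
    intro j
    have hsj : (0:ℤ) < (s j:ℤ) := by exact_mod_cast hs j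
    have hsq : (0:ℚ) < (s j:ℚ) := by exact_mod_cast hs j
    obtain ⟨hz0, hz1, hzm⟩ := hz j
    obtain ⟨hr0, hr1⟩ := hr j
    by_cases h0 : r j = 0
    · left
      have hzz : z j = 0 := by
        have h3 : z j % (s j:ℤ) = z j := Int.emod_eq_of_lt hz0 hz1
        rw [h0, zero_add] at hzm
        rw [← h3, hzm]
      rw [h0, hzz]; norm_num
    · right
      have hm : r j + z j = s j := by
        by_cases hlt : r j + z j < (s j:ℤ)
        · have h4 := Int.emod_eq_of_lt (by omega : (0:ℤ) ≤ r j + z j) hlt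
          omega
        · have h5 : (r j + z j - s j) % (s j:ℤ) = (r j + z j) % (s j:ℤ) := by
            simp [Int.sub_emod]
          have h6 := Int.emod_eq_of_lt (a := r j + z j - (s j:ℤ)) (b := (s j:ℤ)) (by omega) (by omega)
          omega
      constructor
      · apply div_pos _ hsq; exact_mod_cast (by omega : (0:ℤ) < r j)
      · have h7 : (z j:ℚ) = (s j:ℚ) - (r j:ℚ) := by
          exact_mod_cast (by omega : (z j:ℤ) = (s j:ℤ) - r j)
        rw [h7, sub_div, div_self (ne_of_gt hsq)]
  exact sum_eq (fun j => (r j:ℚ)/(s j:ℚ)) (fun j => (z j:ℚ)/(s j:ℚ)) hx hy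
end

section
/- Let s = (s_1,…,s_n) be a sequence of positive integers, and set s̃ = (1, s_1,…,s_n, 1) and ũ = reverse(s̃) = (1, s_n,…,s_1, 1). For every r = (r_0, r_1,…,r_n, r_{n+1}) with r_0 = r_{n+1} = 0 and r_i ∈ {0,…,s_i−1} for 1 ≤ i ≤ n, we have des_{s̃}(r) = asc_{s̃}(Φ_{s̃}(r)) = des_{ũ}(reverse(Φ_{s̃}(r))), where Φ_{s̃}(r) is the sequence z = (z_0,…,z_{n+1}) with z_i ∈ {0,…,s̃_i−1} and r_i + z_i ≡ 0 (mod s̃_i). -/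
lemma ncard_exists_succ {N : ℕ} (Q : Fin (N+1) → Fin (N+1) → Prop) [DecidablePred (fun j : Fin N => Q j.castSucc j.succ)] :
    Set.ncard {i : Fin (N+1) | ∃ h : (i:ℕ)+1 < N+1, Q i ⟨(i:ℕ)+1, h⟩} =
    (Finset.univ.filter (fun j : Fin N => Q j.castSucc j.succ)).card := by
  have hset : {i : Fin (N+1) | ∃ h : (i:ℕ)+1 < N+1, Q i ⟨(i:ℕ)+1, h⟩} =
      ↑((Finset.univ.filter (fun j : Fin N => Q j.castSucc j.succ)).image Fin.castSucc) := by
    ext i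
    simp only [Set.mem_setOf_eq, Finset.coe_image, Set.mem_image, Finset.mem_coe,
      Finset.mem_filter, Finset.mem_univ, true_and]
    constructor
    · rintro ⟨h, hq⟩
      refine ⟨⟨i, by omega⟩, ?_, by ext; simp⟩
      have h1 : (⟨i, by omega⟩ : Fin N).castSucc = i := by ext; simp
      have h2 : (⟨i, by omega⟩ : Fin N).succ = ⟨(i:ℕ)+1, h⟩ := by ext; simp
      rw [h1, h2]; exact hq
    · rintro ⟨j, hq, rfl⟩
      have h : ((j.castSucc : Fin (N+1)) : ℕ) + 1 < N + 1 := by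
        simp only [Fin.coe_castSucc]; omega
      refine ⟨h, ?_⟩
      have h2 : (⟨((j.castSucc : Fin (N+1)) : ℕ)+1, h⟩ : Fin (N+1)) = j.succ := by ext; simp
      rw [h2]; exact hq
  rw [hset, Set.ncard_coe_finset, Finset.card_image_of_injective _ (Fin.castSucc_injective N)]

lemma frac_lt (a b : ℤ) (p q : ℕ) (hp : 0 < p) (hq : 0 < q) :
    (a:ℚ)/(p:ℚ) < (b:ℚ)/(q:ℚ) ↔ a * q < b * p := by
  rw [div_lt_div_iff₀ (by exact_mod_cast hp) (by exact_mod_cast hq)]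
  exact_mod_cast Iff.rfl

set_option maxHeartbeats 1000000 in
/-- with `s̃ = (1,s_1,…,s_n,1)` and `r_0 = r_{n+1} = 0`,
`des_{s̃}(r) = asc_{s̃}(Φ_{s̃}(r)) = des_{ũ}(reverse(Φ_{s̃}(r)))`. -/
theorem stmt_16 (n : ℕ) (s : Fin n → ℕ) (hs : ∀ i, 0 < s i)
    (st : Fin (n + 2) → ℕ) (hst : st = Fin.cons 1 (Fin.snoc s 1))
    (r : Fin (n + 2) → ℤ) (hr0 : r 0 = 0) (hrl : r (Fin.last (n + 1)) = 0)
    (hr : ∀ j, 0 ≤ r j ∧ r j < (st j : ℤ))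
    (z : Fin (n + 2) → ℤ)
    (hz : ∀ j, 0 ≤ z j ∧ z j < (st j : ℤ) ∧ (r j + z j) % (st j : ℤ) = 0) :
    sDes st r = sAsc st z ∧
      sAsc st z = sDes (fun j => st (Fin.rev j)) (fun j => z (Fin.rev j)) := by
  have hstpos : ∀ j, (0:ℤ) < (st j : ℤ) := fun j => lt_of_le_of_lt (hr j).1 (hr j).2
  have hstpos' : ∀ j, 0 < st j := fun j => by exact_mod_cast hstpos j
  have hzc : ∀ j, (r j = 0 ∧ z j = 0) ∨ (0 < r j ∧ 0 < z j ∧ r j + z j = (st j : ℤ)) := by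
    intro j
    obtain ⟨h1, h2, h3⟩ := hz j
    obtain ⟨h4, h5⟩ := hr j
    obtain ⟨k, hk⟩ := Int.dvd_of_emod_eq_zero h3
    have hst := hstpos j
    have hk01 : k = 0 ∨ k = 1 := by
      by_contra hc
      push_neg at hc
      obtain ⟨hk0, hk1⟩ := hc
      rcases lt_or_gt_of_ne hk0 with h | h
      · nlinarith
      · have : 2 ≤ k := by omega
        nlinarith
    rcases hk01 with rfl | rfl
    · rw [mul_zero] at hk; left; omega
    · rw [mul_one] at hk; right; omega
  have e1 : sDes st r = (Finset.univ.filter (fun j : Fin (n+1) =>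
      (r j.succ : ℚ)/(st j.succ : ℚ) < (r j.castSucc : ℚ)/(st j.castSucc : ℚ))).card := by
    unfold sDes
    exact ncard_exists_succ (fun i i' => (r i' : ℚ)/(st i' : ℚ) < (r i : ℚ)/(st i : ℚ))
  have e2 : sAsc st z = (Finset.univ.filter (fun j : Fin (n+1) =>
      (z j.castSucc : ℚ)/(st j.castSucc : ℚ) < (z j.succ : ℚ)/(st j.succ : ℚ))).card := by
    unfold sAsc
    exact ncard_exists_succ (fun i i' => (z i : ℚ)/(st i : ℚ) < (z i' : ℚ)/(st i' : ℚ))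
  have e1' : sDes st r = (Finset.univ.filter (fun j : Fin (n+1) =>
      r j.succ * (st j.castSucc : ℤ) < r j.castSucc * (st j.succ : ℤ))).card := by
    rw [e1]; congr 1
    apply Finset.filter_congr
    intro j _
    exact frac_lt _ _ _ _ (hstpos' _) (hstpos' _)
  have e2' : sAsc st z = (Finset.univ.filter (fun j : Fin (n+1) =>
      z j.castSucc * (st j.succ : ℤ) < z j.succ * (st j.castSucc : ℤ))).card := by
    rw [e2]; congr 1
    apply Finset.filter_congr
    intro j _
    exact frac_lt _ _ _ _ (hstpos' _) (hstpos' _)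
  have key : (Finset.univ.filter (fun j : Fin (n+1) =>
      r j.succ * (st j.castSucc : ℤ) < r j.castSucc * (st j.succ : ℤ))).card =
      (Finset.univ.filter (fun j : Fin (n+1) =>
      z j.castSucc * (st j.succ : ℤ) < z j.succ * (st j.castSucc : ℤ))).card := by
    set f : ℕ → ℤ := fun k => if h : k < n + 2 then (if 0 < r ⟨k, h⟩ then 1 else 0) else 0 with hf
    have hsum : ∑ j : Fin (n+1),
        ((if r j.succ * (st j.castSucc : ℤ) < r j.castSucc * (st j.succ : ℤ) then (1:ℤ) else 0)
          - (if z j.castSucc * (st j.succ : ℤ) < z j.succ * (st j.castSucc : ℤ) then (1:ℤ) else 0))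
        = ∑ j : Fin (n+1), (f (j : ℕ) - f ((j : ℕ) + 1)) := by
      apply Finset.sum_congr rfl
      intro j _
      have hc2 : ((j : ℕ) : ℕ) < n + 2 := by omega
      have hs2 : (j : ℕ) + 1 < n + 2 := by omega
      have hfc : f (j : ℕ) = if 0 < r j.castSucc then (1:ℤ) else 0 := by
        simp only [hf]
        rw [dif_pos hc2]
        have hcast : (⟨(j : ℕ), hc2⟩ : Fin (n+2)) = j.castSucc := by ext; simp
        rw [hcast]
      have hfs : f ((j : ℕ) + 1) = if 0 < r j.succ then (1:ℤ) else 0 := by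
        simp only [hf]
        rw [dif_pos hs2]
        have hcast : (⟨(j : ℕ) + 1, hs2⟩ : Fin (n+2)) = j.succ := by ext; simp
        rw [hcast]
      rw [hfc, hfs]
      have A := hstpos j.castSucc
      have B := hstpos j.succ
      rcases hzc j.castSucc with ⟨hc1, hc2'⟩ | ⟨hc1, hc2', hc3⟩ <;>
        rcases hzc j.succ with ⟨hs1, hs2'⟩ | ⟨hs1, hs2', hs3⟩
      · rw [hc1, hs1, hc2', hs2']; norm_num
      · -- r castSucc = 0, r succ > 0 : no descent, ascent; b: 0, 1
        rw [if_neg (by nlinarith : ¬ r j.succ * (st j.castSucc : ℤ) < r j.castSucc * (st j.succ : ℤ)),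
          if_pos (by nlinarith : z j.castSucc * (st j.succ : ℤ) < z j.succ * (st j.castSucc : ℤ)),
          if_neg (by omega : ¬ (0:ℤ) < r j.castSucc), if_pos hs1]
      · -- r castSucc > 0, r succ = 0 : descent, no ascent; b: 1, 0
        rw [if_pos (by nlinarith : r j.succ * (st j.castSucc : ℤ) < r j.castSucc * (st j.succ : ℤ)),
          if_neg (by nlinarith : ¬ z j.castSucc * (st j.succ : ℤ) < z j.succ * (st j.castSucc : ℤ)),
          if_pos hc1, if_neg (by omega : ¬ (0:ℤ) < r j.succ)]
      · -- both positive
        rw [if_pos hc1, if_pos hs1]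
        by_cases hP : r j.succ * (st j.castSucc : ℤ) < r j.castSucc * (st j.succ : ℤ)
        · rw [if_pos hP, if_pos (by nlinarith : z j.castSucc * (st j.succ : ℤ) < z j.succ * (st j.castSucc : ℤ))]
        · rw [if_neg hP, if_neg (by intro h; exact hP (by nlinarith) :
            ¬ z j.castSucc * (st j.succ : ℤ) < z j.succ * (st j.castSucc : ℤ))]
          norm_num
    have htel : ∑ j : Fin (n+1), (f (j : ℕ) - f ((j : ℕ) + 1)) = 0 := by
      rw [Fin.sum_univ_eq_sum_range (fun k => f k - f (k+1)) (n+1),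
        Finset.sum_range_sub' f (n+1)]
      have h0 : f 0 = 0 := by
        simp only [hf]
        rw [dif_pos (by omega : (0:ℕ) < n + 2)]
        have hcast : (⟨0, by omega⟩ : Fin (n+2)) = 0 := by ext; simp
        rw [hcast, hr0]
        norm_num
      have hl : f (n+1) = 0 := by
        simp only [hf]
        rw [dif_pos (by omega : n + 1 < n + 2)]
        have hcast : (⟨n+1, by omega⟩ : Fin (n+2)) = Fin.last (n+1) := by ext; simp
        rw [hcast, hrl]
        norm_num
      rw [h0, hl]; ring
    rw [htel, Finset.sum_sub_distrib, Finset.sum_boole, Finset.sum_boole] at hsum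
    have := sub_eq_zero.mp hsum
    exact_mod_cast this
  have e3 : sDes (fun j => st (Fin.rev j)) (fun j => z (Fin.rev j)) =
      (Finset.univ.filter (fun j : Fin (n+1) =>
        (z (Fin.rev j.succ) : ℚ)/(st (Fin.rev j.succ) : ℚ) <
        (z (Fin.rev j.castSucc) : ℚ)/(st (Fin.rev j.castSucc) : ℚ))).card := by
    unfold sDes
    exact ncard_exists_succ (fun i i' => (z (Fin.rev i') : ℚ)/(st (Fin.rev i') : ℚ) <
      (z (Fin.rev i) : ℚ)/(st (Fin.rev i) : ℚ))
  have e3' : sDes (fun j => st (Fin.rev j)) (fun j => z (Fin.rev j)) =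
      (Finset.univ.filter (fun j : Fin (n+1) =>
        (z j.rev.castSucc : ℚ)/(st j.rev.castSucc : ℚ) <
        (z j.rev.succ : ℚ)/(st j.rev.succ : ℚ))).card := by
    rw [e3]; congr 1
    apply Finset.filter_congr
    intro j _
    rw [Fin.rev_succ, Fin.rev_castSucc]
  have e4 : (Finset.univ.filter (fun j : Fin (n+1) =>
        (z j.rev.castSucc : ℚ)/(st j.rev.castSucc : ℚ) <
        (z j.rev.succ : ℚ)/(st j.rev.succ : ℚ))).card =
      (Finset.univ.filter (fun j : Fin (n+1) =>
        (z j.castSucc : ℚ)/(st j.castSucc : ℚ) < (z j.succ : ℚ)/(st j.succ : ℚ))).card := by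
    have himg : Finset.univ.filter (fun j : Fin (n+1) =>
        (z j.rev.castSucc : ℚ)/(st j.rev.castSucc : ℚ) <
        (z j.rev.succ : ℚ)/(st j.rev.succ : ℚ)) =
        (Finset.univ.filter (fun j : Fin (n+1) =>
        (z j.castSucc : ℚ)/(st j.castSucc : ℚ) < (z j.succ : ℚ)/(st j.succ : ℚ))).image Fin.rev := by
      ext a
      simp only [Finset.mem_filter, Finset.mem_univ, true_and, Finset.mem_image]
      constructor
      · intro h
        exact ⟨a.rev, h, Fin.rev_rev a⟩
      · rintro ⟨b, hb, rfl⟩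
        rwa [Fin.rev_rev]
    rw [himg, Finset.card_image_of_injective _ Fin.rev_injective]
  constructor
  · rw [e1', e2', key]
  · rw [e2, e3', e4]
end

section
/- Let s = (s_1,…,s_n) be a sequence of positive integers with s_1 = 1, and let s* = (s_1,…,s_n,1). For every r ∈ Ψ_n = {0,…,s_1−1} × ⋯ × {0,…,s_n−1}, we have des_{s*}(r_1,…,r_n,0) = asc_{s*}(z_1,…,z_n,0) = asc_s(z_1,…,z_n), where z_i = (−r_i) mod s_i (i.e., z_i ∈ {0,…,s_i−1} with r_i + z_i ≡ 0 mod s_i). -/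
/-!
Put `q j = r j / s j ∈ [0, 1)` for the extended sequence `(r, 0)`; then `z j / s j = fract (-q j)`,
which is `0` when `q j = 0` and `1 - q j` otherwise. A check of the few cases gives, for
consecutive entries `x = q j`, `y = q (j + 1)`,
`[y < x] + [0 < y] = [fract (-x) < fract (-y)] + [0 < x]`.
Summed over `j`, the positivity terms on both sides count the positive entries of `q` and cancel,
because `q` vanishes at both ends: at the first entry since `s 0 = 1`, at the last by construction.
Appending `0` to `z` adds no ascent since `z ≥ 0`.
-/

open Finset

def ratio {N : ℕ} (s : Fin N → ℕ) (r : Fin N → ℤ) (j : Fin N) : ℚ :=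
  (r j : ℚ) / (s j : ℚ)

lemma ratio_snoc_castSucc {n : ℕ} (s : Fin n → ℕ) (t : ℕ) (z : Fin n → ℤ) (a : ℤ) (j : Fin n) :
    ratio (Fin.snoc s t) (Fin.snoc z a) j.castSucc = ratio s z j := by
  simp [ratio]

lemma ratio_snoc_last {n : ℕ} (s : Fin n → ℕ) (t : ℕ) (z : Fin n → ℤ) (a : ℤ) :
    ratio (Fin.snoc s t) (Fin.snoc z a) (Fin.last n) = a / t := by
  simp [ratio]

lemma ncard_adjacent_eq_card {n : ℕ} (p : Fin (n + 1) → Fin (n + 1) → Prop)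
    [DecidableRel p] :
    Set.ncard {i : Fin (n + 1) | ∃ h : (i : ℕ) + 1 < n + 1, p i ⟨(i : ℕ) + 1, h⟩} =
      #{j : Fin n | p j.castSucc j.succ} := by
  have himage : {i : Fin (n + 1) | ∃ h : (i : ℕ) + 1 < n + 1, p i ⟨(i : ℕ) + 1, h⟩} =
      Fin.castSucc '' {j : Fin n | p j.castSucc j.succ} := by
    ext i
    refine Fin.lastCases ?_ (fun j => ?_) i
    · simp
    · simp [Fin.succ]
  rw [himage, Set.ncard_image_of_injective _ (Fin.castSucc_injective n),
    Set.ncard_eq_toFinset_card', Set.toFinset_ofPred]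

lemma sDes_eq_card {n : ℕ} (s : Fin (n + 1) → ℕ) (r : Fin (n + 1) → ℤ) :
    sDes s r = #{j : Fin n | ratio s r j.succ < ratio s r j.castSucc} :=
  ncard_adjacent_eq_card fun i k => ratio s r k < ratio s r i

lemma sAsc_eq_card {n : ℕ} (s : Fin (n + 1) → ℕ) (r : Fin (n + 1) → ℤ) :
    sAsc s r = #{j : Fin n | ratio s r j.castSucc < ratio s r j.succ} :=
  ncard_adjacent_eq_card fun i k => ratio s r i < ratio s r k

lemma sAsc_snoc_zero {n : ℕ} (s : Fin n → ℕ) (t : ℕ) (z : Fin n → ℤ) (hz : ∀ i, 0 ≤ z i) :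
    sAsc (Fin.snoc s t) (Fin.snoc z 0) = sAsc s z := by
  rw [sAsc_eq_card, sAsc, Set.ncard_eq_toFinset_card', Set.toFinset_ofPred]
  congr 1
  ext j
  simp only [mem_filter, mem_univ, true_and, ratio_snoc_castSucc]
  by_cases hj : (j : ℕ) + 1 < n
  · rw [show j.succ = Fin.castSucc ⟨(j : ℕ) + 1, hj⟩ from rfl, ratio_snoc_castSucc]
    exact ⟨fun h => ⟨hj, h⟩, fun ⟨_, h⟩ => h⟩
  · rw [show j.succ = Fin.last n from Fin.ext (by simp; omega), ratio_snoc_last]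
    refine iff_of_false ?_ fun ⟨h, _⟩ => hj h
    rw [Int.cast_zero, zero_div, not_lt]
    exact div_nonneg (Int.cast_nonneg (hz j)) (Nat.cast_nonneg _)

section FractNeg

variable {α : Type*} [Field α] [LinearOrder α] [IsStrictOrderedRing α] [FloorRing α]

lemma fract_neg_of_mem_Ico {x : α} (h0 : 0 ≤ x) (h1 : x < 1) :
    Int.fract (-x) = if x = 0 then 0 else 1 - x := by
  have hx : Int.fract x = x := Int.fract_eq_self.2 ⟨h0, h1⟩
  split_ifs with h
  · simp [h]
  · rw [Int.fract_neg (by rwa [hx]), hx]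

lemma descent_add_pos_eq_ascent_fract_neg_add_pos {x y : α} (hx : 0 ≤ x ∧ x < 1)
    (hy : 0 ≤ y ∧ y < 1) :
    (if y < x then 1 else 0 : ℕ) + (if 0 < y then 1 else 0) =
      (if Int.fract (-x) < Int.fract (-y) then 1 else 0) + (if 0 < x then 1 else 0) := by
  rw [fract_neg_of_mem_Ico hx.1 hx.2, fract_neg_of_mem_Ico hy.1 hy.2]
  rcases hx.1.eq_or_lt with rfl | hx0 <;> rcases hy.1.eq_or_lt with rfl | hy0 <;>
    simp only [ne_of_gt, *, if_true, if_false, lt_irrefl] <;> split_ifs <;> linarith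

theorem card_descents_eq_card_ascents_fract_neg {n : ℕ} (q : Fin (n + 1) → α)
    (hq : ∀ j, 0 ≤ q j ∧ q j < 1) (h0 : q 0 = 0) (hlast : q (Fin.last n) = 0) :
    #{j : Fin n | q j.succ < q j.castSucc} =
      #{j : Fin n | Int.fract (-q j.castSucc) < Int.fract (-q j.succ)} := by
  have hpos : ∑ j : Fin n, (if 0 < q j.succ then 1 else 0) =
      ∑ j : Fin n, (if 0 < q j.castSucc then 1 else 0) := by
    have h := Fin.sum_univ_succ fun j => if 0 < q j then 1 else 0
    rw [Fin.sum_univ_castSucc] at h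
    simpa [h0, hlast] using h.symm
  simp only [card_filter]
  apply Nat.add_right_cancel (m := ∑ j : Fin n, if 0 < q j.succ then 1 else 0)
  rw [← sum_add_distrib, hpos, ← sum_add_distrib]
  exact sum_congr rfl fun j _ =>
    descent_add_pos_eq_ascent_fract_neg_add_pos (hq j.castSucc) (hq j.succ)

end FractNeg

lemma div_eq_fract_neg_div {a b m : ℤ} (hm : 0 < m) (hb : 0 ≤ b ∧ b < m) (hdvd : m ∣ a + b) :
    (b : ℚ) / m = Int.fract (-((a : ℚ) / m)) := by
  obtain ⟨k, hk⟩ := hdvd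
  have hm₀ : (0 : ℚ) < m := by exact_mod_cast hm
  refine (Int.fract_eq_iff.2 ⟨div_nonneg (by exact_mod_cast hb.1) hm₀.le, ?_, -k, ?_⟩).symm
  · rw [div_lt_one hm₀]; exact_mod_cast hb.2
  · have : (a : ℚ) + b = m * k := by exact_mod_cast hk
    field_simp
    push_cast
    linarith

lemma ratio_snoc_zero_mem_Ico {n : ℕ} (s : Fin n → ℕ) (t : ℕ) (hs : ∀ i, 0 < s i)
    (r : Fin n → ℤ) (hr : r ∈ lhPsi s) (j : Fin (n + 1)) :
    0 ≤ ratio (Fin.snoc s t) (Fin.snoc r 0) j ∧ ratio (Fin.snoc s t) (Fin.snoc r 0) j < 1 := by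
  induction j using Fin.lastCases with
  | last => simp [ratio_snoc_last]
  | cast i =>
    have hsi : (0 : ℚ) < s i := by exact_mod_cast hs i
    rw [ratio_snoc_castSucc, ratio, div_lt_one hsi]
    exact ⟨div_nonneg (by exact_mod_cast (hr i).1) hsi.le, by exact_mod_cast (hr i).2⟩

lemma ratio_snoc_zero_eq_fract_neg {n : ℕ} (s : Fin n → ℕ) (t : ℕ) (hs : ∀ i, 0 < s i)
    (r z : Fin n → ℤ) (hz : ∀ i, 0 ≤ z i ∧ z i < (s i : ℤ) ∧ (r i + z i) % (s i : ℤ) = 0)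
    (j : Fin (n + 1)) :
    ratio (Fin.snoc s t) (Fin.snoc z 0) j = Int.fract (-ratio (Fin.snoc s t) (Fin.snoc r 0) j) := by
  induction j using Fin.lastCases with
  | last => simp [ratio_snoc_last]
  | cast i =>
    rw [ratio_snoc_castSucc, ratio_snoc_castSucc, ratio, ratio]
    exact_mod_cast div_eq_fract_neg_div (by exact_mod_cast hs i) ⟨(hz i).1, (hz i).2.1⟩
      (Int.dvd_of_emod_eq_zero (hz i).2.2)

/-- if `s_1 = 1`, then
`des_{s*}(r,0) = asc_{s*}(Φ_s(r),0) = asc_s(Φ_s(r))`. -/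
theorem stmt_17 (n : ℕ) (hn : 0 < n) (s : Fin n → ℕ) (hs : ∀ i, 0 < s i)
    (h1 : s ⟨0, hn⟩ = 1)
    (r : Fin n → ℤ) (hr : r ∈ lhPsi s)
    (z : Fin n → ℤ)
    (hz : ∀ i, 0 ≤ z i ∧ z i < (s i : ℤ) ∧ (r i + z i) % (s i : ℤ) = 0) :
    sDes (Fin.snoc s 1) (Fin.snoc r (0 : ℤ)) = sAsc (Fin.snoc s 1) (Fin.snoc z (0 : ℤ)) ∧
      sAsc (Fin.snoc s 1) (Fin.snoc z (0 : ℤ)) = sAsc s z := by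
  have hq := ratio_snoc_zero_mem_Ico s 1 hs r hr
  have hfirst : ratio (Fin.snoc s 1) (Fin.snoc r 0) 0 = 0 := by
    have hr0 : r ⟨0, hn⟩ = 0 := by have := hr ⟨0, hn⟩; rw [h1] at this; omega
    rw [show (0 : Fin (n + 1)) = Fin.castSucc ⟨0, hn⟩ from rfl, ratio_snoc_castSucc, ratio, hr0,
      Int.cast_zero, zero_div]
  have hlast : ratio (Fin.snoc s 1) (Fin.snoc r 0) (Fin.last n) = 0 := by simp [ratio_snoc_last]
  refine ⟨?_, sAsc_snoc_zero s 1 z fun i => (hz i).1⟩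
  rw [sDes_eq_card, sAsc_eq_card, funext (ratio_snoc_zero_eq_fract_neg s 1 hs r z hz)]
  exact card_descents_eq_card_ascents_fract_neg _ hq hfirst hlast
end
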